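/- arXiv:1812.02955 — 7 statements merged into one kernel-verified Lean document; each statement's English description precedes it below -/
import Mathlib

section
/- For positive integers n, k, r and m, the mixed restricted Stirling number of the second kind satisfies S_{≤m}(n,k,r) = Σ_{i=r}^{n} (n choose i) · {i brace r}_{≤m} · {n−i brace k−1}_{≤m} · (k−1)!. -/
/-- The restricted Stirling number of the second kind `{n brace k}_{≤ m}`: the number of
partitions of an `n`-element set into exactly `k` nonempty blocks, each of size at most `m`. -/
noncomputable def stirlingLe (m n k : ℕ) : ℕ :=
  Nat.card {P : Finpartition (Finset.univ : Finset (Fin n)) //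
    P.parts.card = k ∧ ∀ B ∈ P.parts, B.card ≤ m}

/-- The mixed restricted Stirling number of the second kind `S_{≤ m}(n, k, r)`: the number of
pairs `(π, (B_2, …, B_k))` where `B_2, …, B_k` are pairwise disjoint nonempty subsets of
`{1, …, n}` of size at most `m` and `π` is a partition of the complement of their union into
exactly `r` nonempty blocks, each of size at most `m`. -/
noncomputable def mixedStirlingLe (m n k r : ℕ) : ℕ :=
  Nat.card {x : Σ B : Fin (k - 1) → Finset (Fin n),
      Finpartition ((Finset.univ : Finset (Fin n)) \ Finset.univ.biUnion B) //
    (∀ i, (x.1 i).Nonempty) ∧ (∀ i, (x.1 i).card ≤ m) ∧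
    (∀ i j, i ≠ j → Disjoint (x.1 i) (x.1 j)) ∧
    x.2.parts.card = r ∧ ∀ p ∈ x.2.parts, p.card ≤ m}

/-!
Sort the pairs `(π, (B_2, …, B_k))` by the set `c` that `π` partitions. Over a fixed `c`, the
tuple is an ordered partition of the complement `cᶜ` into `k - 1` blocks of size at most `m`;
forgetting the order is `(k - 1)!`-to-one, so there are `{n - |c| brace k - 1}_{≤ m} (k - 1)!`
tuples, independently of the `{|c| brace r}_{≤ m}` choices of `π`. Grouping the sets `c` by their
size `i` gives the binomial coefficient, and sizes `i < r` contribute nothing.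
-/

open Finset
open scoped Nat

lemma Finset.image_univ_val_equiv {α ι : Type*} [DecidableEq α] [Fintype ι] {t : Finset α}
    (e : ι ≃ t) : univ.image (fun i => (e i).1) = t := by
  change univ.image (Subtype.val ∘ e) = t
  rw [← image_image, image_univ_equiv, univ_eq_attach, attach_image_val]

lemma Finset.univ_sdiff_eq_iff {α : Type*} [Fintype α] [DecidableEq α] {s t : Finset α} :
    univ \ s = t ↔ s = tᶜ := by
  rw [← compl_eq_univ_sdiff, compl_eq_comm, eq_comm]

lemma natCard_fin_equiv {γ : Type*} {k : ℕ} (e : Fin k ≃ γ) :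
    Nat.card (Fin k ≃ γ) = k ! := by
  rw [← Nat.card_congr ((Equiv.refl (Fin k)).equivCongr e), Nat.card_perm,
    Nat.card_eq_fintype_card, Fintype.card_fin]

namespace Finpartition

variable {α β : Type*} [DecidableEq α] [DecidableEq β]

def mapEmbedding (f : α ↪ β) {s : Finset α} (P : Finpartition s) : Finpartition (s.map f) where
  parts := P.parts.map (Finset.mapEmbedding f).toEmbedding
  supIndep := supIndep_map.2 <| supIndep_iff_pairwiseDisjoint.2 fun _ ha _ hb hab =>
    (disjoint_map f).2 (P.disjoint ha hb hab)
  sup_parts := by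
    conv_rhs => rw [← P.sup_parts]
    rw [sup_map, apply_sup_eq_sup_comp (Finset.map f) (fun _ _ => map_union _ _) rfl]
    rfl
  bot_notMem := by simp

@[simp]
lemma parts_mapEmbedding (f : α ↪ β) {s : Finset α} (P : Finpartition s) :
    (P.mapEmbedding f).parts = P.parts.map (Finset.mapEmbedding f).toEmbedding := rfl

noncomputable def comapEmbedding (f : α ↪ β) {s : Finset α} (Q : Finpartition (s.map f)) :
    Finpartition s where
  parts := Q.parts.image fun p => p.preimage f f.injective.injOn
  supIndep := by
    rw [supIndep_iff_pairwiseDisjoint, coe_image]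
    rintro _ ⟨p, hp, rfl⟩ _ ⟨q, hq, rfl⟩ hpq
    exact disjoint_preimage (hs := f.injective.injOn) (ht := f.injective.injOn)
      (Q.disjoint hp hq (by rintro rfl; exact hpq rfl))
  sup_parts := by
    ext a
    simp only [mem_sup, mem_image, id, exists_exists_and_eq_and, mem_preimage]
    refine ⟨fun ⟨p, hp, hap⟩ => (mem_map' f).1 (Q.le hp hap), fun ha => ?_⟩
    exact Q.exists_mem (mem_map_of_mem f ha)
  bot_notMem := by
    intro h
    obtain ⟨p, hp, hpe⟩ := mem_image.1 h
    obtain ⟨u, -, rfl⟩ := subset_map_iff.1 (Q.le hp)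
    rw [preimage_map] at hpe
    subst hpe
    exact Q.empty_notMem_parts hp

lemma mapEmbedding_comapEmbedding (f : α ↪ β) {s : Finset α} (Q : Finpartition (s.map f)) :
    (Q.comapEmbedding f).mapEmbedding f = Q := by
  have map_preimage : ∀ p ∈ Q.parts, (p.preimage f f.injective.injOn).map f = p := by
    intro p hp
    obtain ⟨u, -, rfl⟩ := subset_map_iff.1 (Q.le hp)
    rw [preimage_map]
  ext p
  simp only [parts_mapEmbedding, comapEmbedding, mem_map, mem_image, exists_exists_and_eq_and,
    RelEmbedding.coe_toEmbedding, Finset.mapEmbedding_apply]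
  constructor
  · rintro ⟨q, hq, rfl⟩
    rwa [map_preimage q hq]
  · exact fun hp => ⟨p, hp, map_preimage p hp⟩

lemma mapEmbedding_injective (f : α ↪ β) (s : Finset α) :
    Function.Injective (mapEmbedding f (s := s)) := fun _ _ h =>
  Finpartition.ext <| map_injective _ <| congrArg parts h

noncomputable def equivMapEmbedding (f : α ↪ β) (s : Finset α) :
    Finpartition s ≃ Finpartition (s.map f) :=
  .ofBijective _ ⟨mapEmbedding_injective f s, fun Q => ⟨_, mapEmbedding_comapEmbedding f Q⟩⟩

end Finpartition

section RestrictedPartition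

variable {α β : Type*} [DecidableEq α] [DecidableEq β]

abbrev RestrictedPartition (s : Finset α) (r m : ℕ) : Type _ :=
  {P : Finpartition s // #P.parts = r ∧ ∀ B ∈ P.parts, #B ≤ m}

noncomputable def RestrictedPartition.equivMapEmbedding (f : α ↪ β) (s : Finset α)
    (r m : ℕ) : RestrictedPartition s r m ≃ RestrictedPartition (s.map f) r m :=
  (Finpartition.equivMapEmbedding f s).subtypeEquiv fun P => by
    simp [Finpartition.equivMapEmbedding, Equiv.ofBijective]

lemma natCard_restrictedPartition (s : Finset α) (r m : ℕ) :
    Nat.card (RestrictedPartition s r m) = stirlingLe m #s r := by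
  let f : Fin #s ↪ α := s.equivFin.symm.toEmbedding.trans (.subtype _)
  have hf : univ.map f = s := by
    rw [← map_map, univ_map_equiv_to_embedding, ← attach_eq_univ, attach_map_val]
  rw [stirlingLe, Nat.card_congr (RestrictedPartition.equivMapEmbedding f univ r m), hf]

lemma stirlingLe_eq_zero_of_lt {m n k : ℕ} (h : n < k) : stirlingLe m n k = 0 :=
  have : IsEmpty (RestrictedPartition (univ : Finset (Fin n)) k m) := ⟨fun ⟨P, hP, _⟩ =>
    (hP ▸ P.card_parts_le_card).not_gt (by rwa [card_univ, Fintype.card_fin])⟩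
  Nat.card_of_isEmpty

end RestrictedPartition

section OrderedPartition

variable {α : Type*} [DecidableEq α]

abbrev OrderedRestrictedPartition (s : Finset α) (k m : ℕ) : Type _ :=
  {B : Fin k → Finset α // (∀ i, (B i).Nonempty) ∧ (∀ i, #(B i) ≤ m) ∧
    (∀ i j, i ≠ j → Disjoint (B i) (B j)) ∧ univ.biUnion B = s}

namespace OrderedRestrictedPartition

variable {s : Finset α} {k m : ℕ}

lemma injective (B : OrderedRestrictedPartition s k m) : Function.Injective B.1 := by
  intro i j hij
  by_contra hne
  exact (B.2.1 j).ne_empty (disjoint_self.1 (hij ▸ B.2.2.2.1 i j hne))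

def toRestrictedPartition (B : OrderedRestrictedPartition s k m) :
    RestrictedPartition s k m :=
  ⟨{ parts := univ.image B.1
     supIndep := by
       rw [supIndep_iff_pairwiseDisjoint, coe_image]
       rintro _ ⟨i, -, rfl⟩ _ ⟨j, -, rfl⟩ hij
       exact B.2.2.2.1 i j (ne_of_apply_ne _ hij)
     sup_parts := by rw [sup_image, Function.id_comp, sup_eq_biUnion, B.2.2.2.2]
     bot_notMem := by
       intro h
       obtain ⟨i, -, hi⟩ := mem_image.1 h
       exact (B.2.1 i).ne_empty hi },
   by rw [card_image_of_injective _ B.injective, card_univ, Fintype.card_fin], by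
     simp only [forall_mem_image, mem_univ, true_implies]
     exact B.2.2.1⟩

def ofEquivParts (P : RestrictedPartition s k m) (e : Fin k ≃ P.1.parts) :
    OrderedRestrictedPartition s k m :=
  ⟨fun i => (e i).1, fun i => P.1.nonempty_of_mem_parts (e i).2, fun i => P.2.2 _ (e i).2,
    fun i j hij => P.1.disjoint (e i).2 (e j).2 (by simpa using e.injective.ne hij), by
    calc univ.biUnion (fun i => (e i).1) = (univ.image fun i => (e i).1).biUnion id :=
          (image_biUnion (f := fun i => (e i).1) (t := id)).symm
      _ = s := by rw [image_univ_val_equiv, P.1.biUnion_parts]⟩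

lemma toRestrictedPartition_ofEquivParts (P : RestrictedPartition s k m)
    (e : Fin k ≃ P.1.parts) : (ofEquivParts P e).toRestrictedPartition = P :=
  Subtype.ext <| Finpartition.ext <| image_univ_val_equiv e

noncomputable def equivParts (B : OrderedRestrictedPartition s k m) :
    Fin k ≃ B.toRestrictedPartition.1.parts :=
  .ofBijective (fun i => ⟨B.1 i, mem_image_of_mem _ (mem_univ i)⟩) <| by
    refine ⟨fun i j hij => B.injective (congrArg Subtype.val hij), fun ⟨p, hp⟩ => ?_⟩
    obtain ⟨i, -, rfl⟩ := mem_image.1 hp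
    exact ⟨i, rfl⟩

noncomputable def fiberEquiv (P : RestrictedPartition s k m) :
    {B : OrderedRestrictedPartition s k m // B.toRestrictedPartition = P} ≃
      (Fin k ≃ P.1.parts) where
  toFun B := B.1.equivParts.trans (Equiv.subtypeEquivRight fun p => by rw [B.2])
  invFun e := ⟨ofEquivParts P e, toRestrictedPartition_ofEquivParts P e⟩
  left_inv _ := rfl
  right_inv _ := Equiv.ext fun _ => rfl

end OrderedRestrictedPartition

lemma natCard_orderedRestrictedPartition (s : Finset α) (k m : ℕ) :
    Nat.card (OrderedRestrictedPartition s k m) = stirlingLe m #s k * k ! := by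
  rw [← Nat.card_congr (Equiv.sigmaFiberEquiv OrderedRestrictedPartition.toRestrictedPartition),
    Nat.card_congr (Equiv.sigmaCongrRight OrderedRestrictedPartition.fiberEquiv), Nat.card_sigma]
  have hfiber (P : RestrictedPartition s k m) : Nat.card (Fin k ≃ P.1.parts) = k ! :=
    natCard_fin_equiv (Fintype.equivFinOfCardEq (by simpa using P.2.1)).symm
  simp_rw [hfiber, sum_const, card_univ, smul_eq_mul, ← Nat.card_eq_fintype_card,
    natCard_restrictedPartition]

end OrderedPartition

abbrev MixedConfiguration (n k r m : ℕ) : Type :=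
  {x : Σ B : Fin (k - 1) → Finset (Fin n),
      Finpartition ((Finset.univ : Finset (Fin n)) \ Finset.univ.biUnion B) //
    (∀ i, (x.1 i).Nonempty) ∧ (∀ i, (x.1 i).card ≤ m) ∧
    (∀ i j, i ≠ j → Disjoint (x.1 i) (x.1 j)) ∧
    x.2.parts.card = r ∧ ∀ p ∈ x.2.parts, p.card ≤ m}

namespace MixedConfiguration

variable {n k r m : ℕ}

def fiberEquiv (c : Finset (Fin n)) :
    {x : MixedConfiguration n k r m // univ \ univ.biUnion x.1.1 = c} ≃
      OrderedRestrictedPartition cᶜ (k - 1) m × RestrictedPartition c r m where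
  toFun x := (⟨x.1.1.1, x.1.2.1, x.1.2.2.1, x.1.2.2.2.1, univ_sdiff_eq_iff.1 x.2⟩,
    ⟨x.1.1.2.copy x.2, x.1.2.2.2.2⟩)
  invFun z := ⟨⟨⟨z.1.1, z.2.1.copy (univ_sdiff_eq_iff.2 z.1.2.2.2.2).symm⟩,
    z.1.2.1, z.1.2.2.1, z.1.2.2.2.1, z.2.2⟩, univ_sdiff_eq_iff.2 z.1.2.2.2.2⟩
  left_inv _ := Subtype.ext <| Subtype.ext <| Sigma.ext rfl <| heq_of_eq <| Finpartition.ext rfl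
  right_inv _ := Prod.ext rfl <| Subtype.ext <| Finpartition.ext rfl

end MixedConfiguration

lemma mixedStirlingLe_eq_sum_finset (m n k r : ℕ) :
    mixedStirlingLe m n k r =
      ∑ c : Finset (Fin n), stirlingLe m #c r * (stirlingLe m (n - #c) (k - 1) * (k - 1)!) := by
  rw [mixedStirlingLe, ← Nat.card_congr (Equiv.sigmaFiberEquiv
    fun x : MixedConfiguration n k r m => univ \ univ.biUnion x.1.1), Nat.card_sigma]
  refine sum_congr rfl fun c _ => ?_
  rw [Nat.card_congr (MixedConfiguration.fiberEquiv c), Nat.card_prod,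
    natCard_orderedRestrictedPartition, natCard_restrictedPartition, card_compl, Fintype.card_fin,
    mul_comm]

lemma mixedStirlingLe_eq_sum_range (m n k r : ℕ) :
    mixedStirlingLe m n k r = ∑ i ∈ range (n + 1),
      n.choose i * stirlingLe m i r * stirlingLe m (n - i) (k - 1) * (k - 1)! := by
  rw [mixedStirlingLe_eq_sum_finset, ← powerset_univ, sum_powerset_apply_card
    (fun i => stirlingLe m i r * (stirlingLe m (n - i) (k - 1) * (k - 1)!)), card_univ,
    Fintype.card_fin]
  simp only [smul_eq_mul, mul_assoc]

theorem mixedStirlingLe_eq_sum_stirlingLe_general (n k r m : ℕ) :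
    mixedStirlingLe m n k r =
      ∑ i ∈ Finset.Icc r n,
        n.choose i * stirlingLe m i r * stirlingLe m (n - i) (k - 1) *
          (k - 1).factorial := by
  rw [mixedStirlingLe_eq_sum_range]
  refine (sum_subset (fun i hi => mem_range.2 (Nat.lt_succ_of_le (mem_Icc.1 hi).2)) ?_).symm
  intro i hi hi_notMem
  have hir : i < r := by simp_all
  rw [stirlingLe_eq_zero_of_lt hir, mul_zero, zero_mul, zero_mul]

theorem mixedStirlingLe_eq_sum_stirlingLe (n k r m : ℕ)
    (hn : 1 ≤ n) (hk : 1 ≤ k) (hr : 1 ≤ r) (hm : 1 ≤ m) :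
    mixedStirlingLe m n k r =
      ∑ i ∈ Finset.Icc r n,
        n.choose i * stirlingLe m i r * stirlingLe m (n - i) (k - 1) *
          (k - 1).factorial :=
  mixedStirlingLe_eq_sum_stirlingLe_general n k r m
end

section
/- For positive integers n, k, r and m, the mixed restricted Stirling number of the second kind satisfies S_{≤m}(n,k,r) = (k−1)! · (k+r−1 choose k−1) · {n brace k+r−1}_{≤m}. -/
/-!
Gluing the labelled blocks `B_2, …, B_k` onto `π` gives a partition of `{1, …, n}` into
`k + r - 1` blocks of size at most `m`, together with an injective labelling of `k - 1` of its
blocks; removing the labelled blocks undoes this. Every such partition carries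
`(k + r - 1)! / r! = (k - 1)! * (k + r - 1).choose (k - 1)` labellings.
-/

open Finset Function

namespace Finpartition

lemma sigma_ext {α β : Type*} [Lattice α] [OrderBot α] {s : β → α}
    {x y : Σ b, Finpartition (s b)} (h₁ : x.1 = y.1) (h₂ : x.2.parts = y.2.parts) : x = y := by
  obtain ⟨b, P⟩ := x
  obtain ⟨c, Q⟩ := y
  dsimp only at h₁ h₂
  subst h₁
  rw [Finpartition.ext h₂]

lemma sigma_embedding_ext {α ι : Type*} [Lattice α] [OrderBot α] {a : α}
    {p : Finpartition a → Prop} {x y : Σ P : Subtype p, ι ↪ P.1.parts}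
    (h₁ : x.1.1.parts = y.1.1.parts) (h₂ : ∀ i, (x.2 i : α) = y.2 i) : x = y := by
  obtain ⟨⟨P, _⟩, f⟩ := x
  obtain ⟨⟨Q, _⟩, g⟩ := y
  obtain rfl : P = Q := Finpartition.ext h₁
  rw [Sigma.mk.inj_iff]
  exact ⟨rfl, heq_of_eq (Embedding.ext fun i => Subtype.ext (h₂ i))⟩

lemma _root_.Pairwise.injective_of_disjoint_of_ne_bot {α ι : Type*} [Lattice α] [OrderBot α]
    {f : ι → α} (hd : Pairwise (Disjoint on f)) (hf : ∀ i, f i ≠ ⊥) : Injective f :=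
  pairwise_ne_iff_injective.mp (hd.mono fun i _ h => h.ne (hf i))

lemma sup_parts_sdiff {α : Type*} [GeneralizedBooleanAlgebra α] [DecidableEq α] {a : α}
    (P : Finpartition a) {X : Finset α} (hX : X ⊆ P.parts) :
    (P.parts \ X).sup id = a \ X.sup id := by
  refine ((P.supIndep.disjoint_sup_sup hX sdiff_subset disjoint_sdiff).sdiff_eq_of_sup_eq ?_).symm
  rw [← sup_union, union_sdiff_of_subset hX, P.sup_parts]

variable {α ι : Type*} [Fintype α] [DecidableEq α] [Fintype ι]

def glue (B : ι → Finset α) (hB : ∀ i, (B i).Nonempty) (hd : Pairwise (Disjoint on B))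
    (π : Finpartition (univ \ univ.biUnion B)) : Finpartition (univ : Finset α) where
  parts := univ.image B ∪ π.parts
  supIndep := by
    rw [supIndep_iff_pairwiseDisjoint, coe_union, Set.pairwiseDisjoint_union, coe_image, coe_univ,
      Set.image_univ]
    refine ⟨?_, π.disjoint, ?_⟩
    · rintro _ ⟨i, rfl⟩ _ ⟨j, rfl⟩ hij
      exact hd fun h => hij (congrArg B h)
    · rintro _ ⟨i, rfl⟩ p hp -
      exact (disjoint_sdiff.mono_right (π.le hp)).mono_left (subset_biUnion_of_mem B (mem_univ i))
  sup_parts := by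
    rw [sup_union, sup_image, id_comp, π.sup_parts, ← sup_eq_biUnion, sup_eq_union,
      union_sdiff_of_subset (subset_univ _)]
  bot_notMem := by
    rw [mem_union, mem_image]
    rintro (⟨i, -, hi⟩ | h)
    · exact (hB i).ne_empty hi
    · exact π.bot_notMem h

lemma image_subset_parts (P : Finpartition (univ : Finset α)) (f : ι ↪ P.parts) :
    univ.image (fun i => (f i : Finset α)) ⊆ P.parts := by
  rintro _ hp
  obtain ⟨i, -, rfl⟩ := mem_image.mp hp
  exact (f i).2

def unglue (P : Finpartition (univ : Finset α)) (f : ι ↪ P.parts) :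
    Finpartition (univ \ univ.biUnion fun i => (f i : Finset α)) :=
  P.ofSubset (sdiff_subset (t := univ.image fun i => (f i : Finset α))) <| by
    rw [P.sup_parts_sdiff (image_subset_parts P f), sup_image, id_comp, sup_eq_biUnion]

lemma parts_unglue (P : Finpartition (univ : Finset α)) (f : ι ↪ P.parts) :
    (P.unglue f).parts = P.parts \ univ.image fun i => (f i : Finset α) := rfl

lemma card_parts_unglue (P : Finpartition (univ : Finset α)) (f : ι ↪ P.parts) :
    #(P.unglue f).parts = #P.parts - Fintype.card ι := by
  have hinj : Injective fun i => (f i : Finset α) := Subtype.val_injective.comp f.injective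
  rw [parts_unglue, card_sdiff_of_subset (image_subset_parts P f),
    card_image_of_injective univ hinj, card_univ]

lemma disjoint_image_parts {B : ι → Finset α} (hB : ∀ i, (B i).Nonempty)
    (π : Finpartition (univ \ univ.biUnion B)) : Disjoint (univ.image B) π.parts := by
  rw [disjoint_left]
  rintro _ hp hp'
  obtain ⟨i, -, rfl⟩ := mem_image.mp hp
  obtain ⟨x, hx⟩ := hB i
  exact (mem_sdiff.mp (π.le hp' hx)).2 (mem_biUnion.mpr ⟨i, mem_univ i, hx⟩)

section Glue

variable {B : ι → Finset α} (hB : ∀ i, (B i).Nonempty) (hd : Pairwise (Disjoint on B))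
  (π : Finpartition (univ \ univ.biUnion B))

lemma parts_glue : (glue B hB hd π).parts = univ.image B ∪ π.parts := rfl

def glueEmbedding : ι ↪ (glue B hB hd π).parts :=
  ⟨fun i => ⟨B i, mem_union_left _ (mem_image_of_mem B (mem_univ i))⟩,
    fun _ _ h => hd.injective_of_disjoint_of_ne_bot (fun i => (hB i).ne_empty)
      (congrArg Subtype.val h)⟩

lemma card_parts_glue : #(glue B hB hd π).parts = Fintype.card ι + #π.parts := by
  rw [parts_glue, card_union_of_disjoint (disjoint_image_parts hB π),
    card_image_of_injective _ (hd.injective_of_disjoint_of_ne_bot fun i => (hB i).ne_empty),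
    card_univ]

lemma card_le_of_mem_parts_glue {m : ℕ} (hBm : ∀ i, #(B i) ≤ m)
    (hπm : ∀ p ∈ π.parts, #p ≤ m) :
    ∀ p ∈ (glue B hB hd π).parts, #p ≤ m := by
  rintro p hp
  rcases mem_union.mp hp with hp | hp
  · obtain ⟨i, -, rfl⟩ := mem_image.mp hp
    exact hBm i
  · exact hπm p hp

lemma parts_unglue_glue : ((glue B hB hd π).unglue (glueEmbedding hB hd π)).parts = π.parts :=
  union_sdiff_cancel_left (disjoint_image_parts hB π)

end Glue

lemma parts_glue_unglue (P : Finpartition (univ : Finset α)) (f : ι ↪ P.parts) :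
    (glue _ (fun i => P.nonempty_of_mem_parts (f i).2)
      (fun i j h => P.disjoint (f i).2 (f j).2 fun h' => h (f.injective (Subtype.ext h')))
      (P.unglue f)).parts = P.parts :=
  union_sdiff_of_subset (image_subset_parts P f)

end Finpartition

section Count

variable (m r c : ℕ) (ι α : Type*) [Fintype ι] [Fintype α] [DecidableEq α]

/-- The set counted by `mixedStirlingLe`, copied verbatim with `Fin (k - 1)` and `Fin n`
generalized, so that the two agree definitionally. -/
abbrev MixedPartition :=
  {x : Σ B : ι → Finset α, Finpartition ((univ : Finset α) \ univ.biUnion B) //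
    (∀ i, (x.1 i).Nonempty) ∧ (∀ i, #(x.1 i) ≤ m) ∧
    (∀ i j, i ≠ j → Disjoint (x.1 i) (x.1 j)) ∧
    #x.2.parts = r ∧ ∀ p ∈ x.2.parts, #p ≤ m}

abbrev BoundedPartition :=
  {P : Finpartition (univ : Finset α) // #P.parts = c ∧ ∀ B ∈ P.parts, #B ≤ m}

def mixedPartitionEquiv :
    MixedPartition m r ι α ≃
      Σ P : BoundedPartition m (Fintype.card ι + r) α, ι ↪ P.1.parts where
  toFun x :=
    ⟨⟨Finpartition.glue x.1.1 x.2.1 (fun _ _ => x.2.2.2.1 _ _) x.1.2,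
      (Finpartition.card_parts_glue _ _ _).trans (congrArg _ x.2.2.2.2.1),
      Finpartition.card_le_of_mem_parts_glue _ _ _ x.2.2.1 x.2.2.2.2.2⟩,
      Finpartition.glueEmbedding _ _ _⟩
  invFun y :=
    ⟨⟨fun i => y.2 i, y.1.1.unglue y.2⟩, fun i => y.1.1.nonempty_of_mem_parts (y.2 i).2,
      fun i => y.1.2.2 _ (y.2 i).2,
      fun i j h =>
        y.1.1.disjoint (y.2 i).2 (y.2 j).2 fun h' => h (y.2.injective (Subtype.ext h')),
      (y.1.1.card_parts_unglue y.2).trans (by rw [y.1.2.1, Nat.add_sub_cancel_left]),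
      fun p hp => y.1.2.2 p (sdiff_subset hp)⟩
  left_inv x := Subtype.ext <| Finpartition.sigma_ext rfl <|
    Finpartition.parts_unglue_glue x.2.1 (fun _ _ => x.2.2.2.1 _ _) x.1.2
  right_inv y := Finpartition.sigma_embedding_ext (Finpartition.parts_glue_unglue y.1.1 y.2)
    fun _ => rfl

theorem card_mixedPartition :
    Nat.card (MixedPartition m r ι α) = (Fintype.card ι + r).descFactorial (Fintype.card ι) *
      Nat.card (BoundedPartition m (Fintype.card ι + r) α) := by
  classical
  have hfiber (P : BoundedPartition m (Fintype.card ι + r) α) :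
      Nat.card (ι ↪ P.1.parts) = (Fintype.card ι + r).descFactorial (Fintype.card ι) := by
    rw [Nat.card_eq_fintype_card, Fintype.card_embedding_eq, Fintype.card_coe, P.2.1]
  rw [Nat.card_congr (mixedPartitionEquiv m r ι α), Nat.card_sigma,
    sum_congr rfl fun P _ => hfiber P, sum_const, card_univ, ← Nat.card_eq_fintype_card,
    smul_eq_mul, mul_comm]

end Count

theorem mixedStirlingLe_eq_stirlingLe_general (n k r m : ℕ)
    (hk : 1 ≤ k) :
    mixedStirlingLe m n k r =
      (k - 1).factorial * (k + r - 1).choose (k - 1) * stirlingLe m n (k + r - 1) := by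
  have hkr : k - 1 + r = k + r - 1 := by omega
  have h := card_mixedPartition m r (Fin (k - 1)) (Fin n)
  rwa [Fintype.card_fin, hkr, Nat.descFactorial_eq_factorial_mul_choose] at h

theorem mixedStirlingLe_eq_stirlingLe (n k r m : ℕ)
    (hn : 1 ≤ n) (hk : 1 ≤ k) (hr : 1 ≤ r) (hm : 1 ≤ m) :
    mixedStirlingLe m n k r =
      (k - 1).factorial * (k + r - 1).choose (k - 1) * stirlingLe m n (k + r - 1) :=
  mixedStirlingLe_eq_stirlingLe_general n k r m hk
end

section
/- For positive integers n, m, k and r, the mixed restricted Stirling numbers of the second kind satisfy the recurrence S_{≤m}(n,k,r) = Σ_{i=0}^{m−1} (n−1 choose i) · [ (k−1)·S_{≤m}(n−i−1,k−1,r) + S_{≤m}(n−i−1,k,r−1) ], where terms whose first argument n−i−1 is negative are taken to be 0, and the term (k−1)·S_{≤m}(n−i−1,k−1,r) is taken to be 0 when k = 1. -/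
open Finset Function

lemma card_filter_exists_eq_sum {ι κ : Type*} (C : Finset ι) (K : Finset κ)
    (R : ι → κ → Prop)
    [DecidablePred fun x => ∃ k ∈ K, R x k] [∀ k, DecidablePred (R · k)]
    (huniq : ∀ x ∈ C, ∀ k ∈ K, ∀ k' ∈ K, R x k → R x k' → k = k') :
    #{x ∈ C | ∃ k ∈ K, R x k} = ∑ k ∈ K, #{x ∈ C | R x k} := by
  classical
  rw [← card_biUnion]
  · congr 1
    ext x
    simp only [mem_filter, mem_biUnion]
    tauto
  · intro k hk k' hk' hne
    simp only [onFun, disjoint_left, mem_filter]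
    exact fun x ⟨hx, hRk⟩ ⟨_, hRk'⟩ => hne (huniq x hx k hk k' hk' hRk hRk')

lemma sum_powerset_filter_card_lt {α M : Type*} [AddCommMonoid M] (t : Finset α) (m : ℕ)
    (g : ℕ → M) :
    ∑ S ∈ t.powerset with #S < m, g #S = ∑ i ∈ range m, (#t).choose i • g i := by
  rw [← sum_fiberwise_of_maps_to (g := card) (t := range m)
    fun S hS => mem_range.2 (mem_filter.1 hS).2]
  refine sum_congr rfl fun i hi => ?_
  rw [filter_filter, ← card_powersetCard, ← sum_const]
  refine sum_congr ?_ fun S hS => by rw [(mem_powersetCard.1 hS).2]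
  ext S
  simp only [mem_filter, mem_powersetCard, mem_powerset]
  exact ⟨fun ⟨hS, _, hcard⟩ => ⟨hS, hcard⟩,
    fun ⟨hS, hcard⟩ => ⟨hS, hcard ▸ mem_range.1 hi, hcard⟩⟩

variable {α β : Type*} [DecidableEq α] [DecidableEq β]

/-- `B` plays the role of `(B_2, …, B_k)`, so `b = k - 1`, and `P` is the set of parts of `π`;
the ground set is an arbitrary finset `s` instead of `{1, …, n}`. -/
structure IsConfig (m r : ℕ) (s : Finset α) {b : ℕ} (B : Fin b → Finset α)
    (P : Finset (Finset α)) : Prop where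
  block_nonempty : ∀ i, (B i).Nonempty
  card_block_le : ∀ i, #(B i) ≤ m
  pairwise_disjoint_block : Pairwise (Disjoint on B)
  block_subset : ∀ i, B i ⊆ s
  part_nonempty : ∀ p ∈ P, p.Nonempty
  card_part_le : ∀ p ∈ P, #p ≤ m
  pairwiseDisjoint_parts : (P : Set (Finset α)).PairwiseDisjoint id
  biUnion_parts : P.biUnion id = s \ univ.biUnion B
  card_parts : #P = r

namespace IsConfig

variable {m r b : ℕ} {s T : Finset α} {B : Fin b → Finset α} {P : Finset (Finset α)}

lemma subset_of_mem (h : IsConfig m r s B P) {p : Finset α} (hp : p ∈ P) :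
    p ⊆ s \ univ.biUnion B :=
  h.biUnion_parts ▸ subset_biUnion_of_mem id hp

lemma disjoint_block_part (h : IsConfig m r s B P) (i : Fin b) {p : Finset α} (hp : p ∈ P) :
    Disjoint (B i) p :=
  ((subset_sdiff.1 (h.subset_of_mem hp)).2.mono_right (subset_biUnion_of_mem B (mem_univ i))).symm

lemma mem_block_or_mem_part (h : IsConfig m r s B P) {a : α} (ha : a ∈ s) :
    (∃ i, a ∈ B i) ∨ ∃ p ∈ P, a ∈ p := by
  by_cases hB : ∃ i, a ∈ B i
  · exact .inl hB
  · have : a ∈ P.biUnion id := by simp_all [h.biUnion_parts]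
    exact .inr (by simpa using this)

lemma disjoint_block (h : IsConfig m r (s \ T) B P) (i : Fin b) : Disjoint T (B i) :=
  disjoint_sdiff.mono_right (h.block_subset i)

lemma notMem_parts (h : IsConfig m r (s \ T) B P) (hT : T.Nonempty) : T ∉ P := fun hTP => by
  obtain ⟨a, ha⟩ := hT
  exact (mem_sdiff.1 (sdiff_subset (h.subset_of_mem hTP ha))).2 ha

lemma removeNth {B : Fin (b + 1) → Finset α} (h : IsConfig m r s B P) (j : Fin (b + 1)) :
    IsConfig m r (s \ B j) (j.removeNth B) P where
  block_nonempty _ := h.block_nonempty _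
  card_block_le _ := h.card_block_le _
  pairwise_disjoint_block :=
    h.pairwise_disjoint_block.comp_of_injective Fin.succAbove_right_injective
  block_subset t :=
    subset_sdiff.2 ⟨h.block_subset _, h.pairwise_disjoint_block (Fin.succAbove_ne j t)⟩
  part_nonempty := h.part_nonempty
  card_part_le := h.card_part_le
  pairwiseDisjoint_parts := h.pairwiseDisjoint_parts
  biUnion_parts := by
    rw [h.biUnion_parts, sdiff_sdiff_left]
    congr 1
    ext a
    simp [Fin.exists_iff_succAbove j, Fin.removeNth_apply]
  card_parts := h.card_parts

lemma insertNth {B : Fin b → Finset α} (h : IsConfig m r (s \ T) B P) (j : Fin (b + 1))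
    (hT : T.Nonempty) (hTm : #T ≤ m) (hTs : T ⊆ s) :
    IsConfig m r s (j.insertNth T B) P := by
  refine ⟨?_, ?_, ?_, ?_, h.part_nonempty, h.card_part_le, h.pairwiseDisjoint_parts, ?_,
    h.card_parts⟩
  · exact j.succAboveCases (by simpa) (by simpa using h.block_nonempty)
  · exact j.succAboveCases (by simpa) (by simpa using h.card_block_le)
  · intro i i' hii'
    induction i using j.succAboveCases <;> induction i' using j.succAboveCases
    · exact absurd rfl hii'
    · simpa [onFun] using h.disjoint_block _
    · simpa [onFun] using (h.disjoint_block _).symm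
    · simpa [onFun] using h.pairwise_disjoint_block (ne_of_apply_ne _ hii')
  · exact j.succAboveCases (by simpa)
      (by simpa using fun t => (h.block_subset t).trans sdiff_subset)
  · rw [h.biUnion_parts]
    ext a
    simp only [mem_sdiff, mem_biUnion, mem_univ, true_and, Fin.exists_iff_succAbove j,
      Fin.insertNth_apply_same, Fin.insertNth_apply_succAbove]
    grind

lemma erase (h : IsConfig m (r + 1) s B P) (hT : T ∈ P) :
    IsConfig m r (s \ T) B (P.erase T) where
  block_nonempty := h.block_nonempty
  card_block_le := h.card_block_le
  pairwise_disjoint_block := h.pairwise_disjoint_block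
  block_subset i := subset_sdiff.2 ⟨h.block_subset i, h.disjoint_block_part i hT⟩
  part_nonempty p hp := h.part_nonempty p (mem_of_mem_erase hp)
  card_part_le p hp := h.card_part_le p (mem_of_mem_erase hp)
  pairwiseDisjoint_parts := h.pairwiseDisjoint_parts.subset (by simp)
  biUnion_parts := by
    have hdisj : Disjoint T ((P.erase T).biUnion id) := (disjoint_biUnion_right _ _ _).2
      fun p hp => h.pairwiseDisjoint_parts hT (mem_of_mem_erase hp) (ne_of_mem_erase hp).symm
    rw [sdiff_right_comm, ← h.biUnion_parts, ← insert_erase hT, biUnion_insert, id,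
      erase_insert_eq_erase, erase_idem, union_sdiff_cancel_left hdisj]
  card_parts := by rw [card_erase_of_mem hT, h.card_parts, Nat.add_sub_cancel]

lemma insert (h : IsConfig m r (s \ T) B P) (hT : T.Nonempty) (hTm : #T ≤ m) (hTs : T ⊆ s) :
    IsConfig m (r + 1) s B (insert T P) := by
  refine ⟨h.block_nonempty, h.card_block_le, h.pairwise_disjoint_block,
    fun i => (h.block_subset i).trans sdiff_subset, ?_, ?_, ?_, ?_, ?_⟩
  · simpa [hT] using h.part_nonempty
  · simpa [hTm] using h.card_part_le
  · rw [coe_insert]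
    exact h.pairwiseDisjoint_parts.insert fun p hp _ =>
      disjoint_sdiff.mono_right ((h.subset_of_mem hp).trans sdiff_subset)
  · rw [biUnion_insert, h.biUnion_parts]
    ext a
    simp only [id, mem_union, mem_sdiff, mem_biUnion, mem_univ, true_and]
    have := fun i => @disjoint_left.1 (h.disjoint_block i) a
    grind
  · rw [card_insert_of_notMem (h.notMem_parts hT), h.card_parts]

lemma map_iff (e : α ↪ β) :
    IsConfig m r (s.map e) (fun i => (B i).map e) (P.map (mapEmbedding e).toEmbedding) ↔
      IsConfig m r s B P := by
  have hparts : (P.map (mapEmbedding e).toEmbedding).biUnion id = (P.biUnion id).map e := by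
    simp [map_eq_image, image_biUnion, biUnion_image]
  have hblocks : univ.biUnion (fun i => (B i).map e) = (univ.biUnion B).map e := by
    simp only [map_eq_image, biUnion_image]
  have hdisj : ((P.map (mapEmbedding e).toEmbedding : Finset (Finset β)) :
      Set (Finset β)).PairwiseDisjoint id ↔ (P : Set (Finset α)).PairwiseDisjoint id := by
    simp [Set.PairwiseDisjoint, Set.Pairwise, onFun]
  constructor
  · intro h
    refine ⟨fun i => by simpa using h.block_nonempty i, fun i => by simpa using h.card_block_le i,
      fun i j hij => by simpa [onFun] using h.pairwise_disjoint_block hij,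
      fun i => by simpa using h.block_subset i, by simpa using h.part_nonempty,
      by simpa using h.card_part_le, hdisj.1 h.pairwiseDisjoint_parts, ?_,
      by simpa using h.card_parts⟩
    simpa [hparts, hblocks, ← Finset.map_sdiff] using h.biUnion_parts
  · intro h
    refine ⟨fun i => by simpa using h.block_nonempty i, fun i => by simpa using h.card_block_le i,
      fun i j hij => by simpa [onFun] using h.pairwise_disjoint_block hij,
      fun i => by simpa using h.block_subset i, by simpa using h.part_nonempty,
      by simpa using h.card_part_le, hdisj.2 h.pairwiseDisjoint_parts, ?_,
      by simpa using h.card_parts⟩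
    simp [hparts, hblocks, ← Finset.map_sdiff, h.biUnion_parts]

def finpartition (h : IsConfig m r s B P) : Finpartition (s \ univ.biUnion B) where
  parts := P
  supIndep := supIndep_iff_pairwiseDisjoint.2 h.pairwiseDisjoint_parts
  sup_parts := by rw [sup_eq_biUnion, h.biUnion_parts]
  bot_notMem h0 := (h.part_nonempty _ h0).ne_empty rfl

end IsConfig

open Classical in
noncomputable def configs (m b r : ℕ) (s : Finset α) :
    Finset ((Fin b → Finset α) × Finset (Finset α)) :=
  {x ∈ Fintype.piFinset (fun _ => s.powerset) ×ˢ s.powerset.powerset | IsConfig m r s x.1 x.2}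

def blocksContaining (m : ℕ) (s : Finset α) (a : α) : Finset (Finset α) :=
  {T ∈ s.powerset | a ∈ T ∧ #T ≤ m}

section configs

variable {m b r : ℕ} {s T : Finset α} {a : α}

@[simp] lemma mem_configs {x : (Fin b → Finset α) × Finset (Finset α)} :
    x ∈ configs m b r s ↔ IsConfig m r s x.1 x.2 := by
  classical
  refine ⟨fun hx => (mem_filter.1 hx).2,
    fun h => mem_filter.2 ⟨mem_product.2 ⟨?_, ?_⟩, h⟩⟩
  · exact Fintype.mem_piFinset.2 fun i => mem_powerset.2 (h.block_subset i)
  · exact mem_powerset.2 fun p hp => mem_powerset.2 ((h.subset_of_mem hp).trans sdiff_subset)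

@[simp] lemma mem_blocksContaining :
    T ∈ blocksContaining m s a ↔ T ⊆ s ∧ a ∈ T ∧ #T ≤ m := by
  simp [blocksContaining]

lemma card_configs_map (e : α ↪ β) : #(configs m b r (s.map e)) = #(configs m b r s) := by
  let F (x : (Fin b → Finset α) × Finset (Finset α)) :
      (Fin b → Finset β) × Finset (Finset β) :=
    (fun i => (x.1 i).map e, x.2.map (mapEmbedding e).toEmbedding)
  symm
  refine card_nbij F (fun x hx => by simpa [F, IsConfig.map_iff] using hx) ?_ ?_
  · intro x _ y _ hxy
    simp only [F, Prod.mk.injEq, funext_iff, (map_injective _).eq_iff] at hxy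
    exact Prod.ext (funext hxy.1) hxy.2
  · rintro ⟨B', P'⟩ hy
    have h := mem_configs.1 hy
    choose B _ hB using fun i => subset_map_iff.1 (h.block_subset i)
    obtain ⟨P, -, rfl⟩ : ∃ P ⊆ s.powerset, P' = P.map (mapEmbedding e).toEmbedding := by
      refine subset_map_iff.1 fun p hp => ?_
      obtain ⟨u, hu, rfl⟩ := subset_map_iff.1 ((h.subset_of_mem hp).trans sdiff_subset)
      exact mem_map_of_mem _ (mem_powerset.2 hu)
    obtain rfl : B' = fun i => (B i).map e := funext hB
    exact ⟨(B, P), by simpa [IsConfig.map_iff] using h, rfl⟩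

lemma card_configs_filter_block_eq (j : Fin b) (hT : T.Nonempty) (hTm : #T ≤ m) (hTs : T ⊆ s) :
    #{x ∈ configs m b r s | x.1 j = T} = #(configs m (b - 1) r (s \ T)) := by
  obtain ⟨b, rfl⟩ := Nat.exists_eq_add_one_of_ne_zero j.pos.ne'
  rw [Nat.add_sub_cancel]
  refine card_nbij' (fun x => (j.removeNth x.1, x.2)) (fun y => (j.insertNth T y.1, y.2))
    ?_ ?_ ?_ ?_
  · intro x hx
    simp only [coe_filter, mem_configs, Set.mem_ofPred_eq, mem_coe] at hx ⊢
    exact hx.2 ▸ hx.1.removeNth j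
  · intro y hy
    simp only [coe_filter, mem_configs, Set.mem_ofPred_eq, mem_coe] at hy ⊢
    exact ⟨hy.insertNth j hT hTm hTs, by simp⟩
  · intro x hx
    simp only [coe_filter, Set.mem_ofPred_eq] at hx
    simp [← hx.2]
  · intro y _
    simp

lemma card_configs_filter_mem_parts (hT : T.Nonempty) (hTm : #T ≤ m) (hTs : T ⊆ s) :
    #{x ∈ configs m b (r + 1) s | T ∈ x.2} = #(configs m b r (s \ T)) := by
  refine card_nbij' (fun x => (x.1, x.2.erase T)) (fun y => (y.1, insert T y.2)) ?_ ?_ ?_ ?_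
  · intro x hx
    simp only [coe_filter, mem_configs, Set.mem_ofPred_eq, mem_coe] at hx ⊢
    exact hx.1.erase hx.2
  · intro y hy
    simp only [coe_filter, mem_configs, Set.mem_ofPred_eq, mem_coe] at hy ⊢
    exact ⟨hy.insert hT hTm hTs, mem_insert_self _ _⟩
  · intro x hx
    simp only [coe_filter, Set.mem_ofPred_eq] at hx
    simp [insert_erase hx.2]
  · intro y hy
    simp [erase_insert ((mem_configs.1 hy).notMem_parts hT)]

lemma IsConfig.exists_mem_parts_iff {B : Fin b → Finset α} {P : Finset (Finset α)}
    (h : IsConfig m r s B P) (ha : a ∈ s) :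
    (∃ T ∈ blocksContaining m s a, T ∈ P) ↔
      ¬ ∃ jT ∈ (univ : Finset (Fin b)) ×ˢ blocksContaining m s a, B jT.1 = jT.2 := by
  constructor
  · rintro ⟨T, hT, hTP⟩ ⟨⟨j, T'⟩, hjT', hj : B j = T'⟩
    subst hj
    simp only [mem_product, mem_blocksContaining] at hT hjT'
    exact disjoint_left.1 (h.disjoint_block_part j hTP) hjT'.2.2.1 hT.2.1
  · intro hB
    rcases h.mem_block_or_mem_part ha with ⟨j, hj⟩ | ⟨p, hp, hap⟩
    · exact absurd ⟨(j, B j), by simp [h.block_subset j, hj, h.card_block_le j], rfl⟩ hB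
    · refine ⟨p, ?_, hp⟩
      simp [(h.subset_of_mem hp).trans sdiff_subset, hap, h.card_part_le p hp]

lemma card_filter_exists_block_eq :
    #{x ∈ configs m b r s | ∃ jT ∈ (univ : Finset (Fin b)) ×ˢ blocksContaining m s a,
        x.1 jT.1 = jT.2} =
      b * ∑ T ∈ blocksContaining m s a, #(configs m (b - 1) r (s \ T)) := by
  rw [card_filter_exists_eq_sum, sum_product]
  · have hfiber : ∀ j, ∀ T ∈ blocksContaining m s a,
        #{x ∈ configs m b r s | x.1 j = T} = #(configs m (b - 1) r (s \ T)) := fun j T hT => by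
      obtain ⟨hTs, haT, hTm⟩ := mem_blocksContaining.1 hT
      exact card_configs_filter_block_eq j ⟨a, haT⟩ hTm hTs
    rw [sum_congr rfl fun j _ => sum_congr rfl (hfiber j), sum_const, card_univ,
      Fintype.card_fin, smul_eq_mul]
  · rintro x hx ⟨j, T⟩ hjT ⟨j', T'⟩ hjT' (rfl : x.1 j = T) (rfl : x.1 j' = T')
    simp only [mem_product, mem_blocksContaining] at hjT hjT'
    obtain rfl : j = j' := by
      by_contra hne
      exact disjoint_left.1 ((mem_configs.1 hx).pairwise_disjoint_block hne) hjT.2.2.1 hjT'.2.2.1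
    rfl

lemma card_filter_exists_mem_parts_eq :
    #{x ∈ configs m b (r + 1) s | ∃ T ∈ blocksContaining m s a, T ∈ x.2} =
      ∑ T ∈ blocksContaining m s a, #(configs m b r (s \ T)) := by
  rw [card_filter_exists_eq_sum]
  · refine sum_congr rfl fun T hT => ?_
    obtain ⟨hTs, haT, hTm⟩ := mem_blocksContaining.1 hT
    exact card_configs_filter_mem_parts ⟨a, haT⟩ hTm hTs
  · intro x hx T hT T' hT' hTP hT'P
    by_contra hne
    exact disjoint_left.1 ((mem_configs.1 hx).pairwiseDisjoint_parts hTP hT'P hne)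
      (mem_blocksContaining.1 hT).2.1 (mem_blocksContaining.1 hT').2.1

theorem card_configs_succ (ha : a ∈ s) :
    #(configs m b (r + 1) s) = ∑ T ∈ blocksContaining m s a,
      (b * #(configs m (b - 1) (r + 1) (s \ T)) + #(configs m b r (s \ T))) := by
  rw [sum_add_distrib, ← mul_sum, ← card_filter_exists_block_eq,
    ← card_filter_exists_mem_parts_eq,
    ← card_filter_add_card_filter_not (s := configs m b (r + 1) s)
      fun x => ∃ jT ∈ (univ : Finset (Fin b)) ×ˢ blocksContaining m s a, x.1 jT.1 = jT.2]
  congr 2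
  exact filter_congr fun x hx => ((mem_configs.1 hx).exists_mem_parts_iff ha).symm

lemma sum_blocksContaining {M : Type*} [AddCommMonoid M] (ha : a ∈ s) (g : ℕ → M) :
    ∑ T ∈ blocksContaining m s a, g #T =
      ∑ i ∈ range m, (#s - 1).choose i • g (i + 1) := by
  rw [← card_erase_of_mem ha, ← sum_powerset_filter_card_lt]
  refine sum_nbij' (·.erase a) (insert a) ?_ ?_ ?_ ?_ ?_
  · intro T hT
    obtain ⟨hTs, haT, hTm⟩ := mem_blocksContaining.1 hT
    simp only [mem_filter, mem_powerset, card_erase_of_mem haT]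
    exact ⟨erase_subset_erase a hTs, by have := card_pos.2 ⟨a, haT⟩; omega⟩
  · intro S hS
    simp only [mem_filter, mem_powerset] at hS
    have haS : a ∉ S := fun h => by simpa using hS.1 h
    simp only [mem_blocksContaining, mem_insert_self, true_and, card_insert_of_notMem haS]
    exact ⟨insert_subset ha (hS.1.trans (erase_subset a s)), hS.2⟩
  · intro T hT
    exact insert_erase (mem_blocksContaining.1 hT).2.1
  · intro S hS
    exact erase_insert fun h => by simpa using (mem_powerset.1 (mem_filter.1 hS).1) h
  · intro T hT
    rw [card_erase_add_one (mem_blocksContaining.1 hT).2.1]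

end configs

theorem mixedStirlingLe_eq_card_configs_univ (m n k r : ℕ) :
    mixedStirlingLe m n k r = #(configs m (k - 1) r (univ : Finset (Fin n))) := by
  rw [mixedStirlingLe, ← Nat.card_eq_finsetCard]
  refine Nat.card_congr
    { toFun x := ⟨(x.1.1, x.1.2.parts), mem_configs.2 ?_⟩
      invFun y := ⟨⟨y.1.1, (mem_configs.1 y.2).finpartition⟩, ?_⟩
      left_inv x := Subtype.ext (Sigma.ext rfl (heq_of_eq (Finpartition.ext rfl)))
      right_inv y := rfl }
  · obtain ⟨⟨B, π⟩, h1, h2, h3, h4, h5⟩ := x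
    exact ⟨h1, h2, h3, fun i => subset_univ _, fun p => π.nonempty_of_mem_parts, h5, π.disjoint,
      π.biUnion_parts, h4⟩
  · have h := mem_configs.1 y.2
    exact ⟨h.block_nonempty, h.card_block_le, h.pairwise_disjoint_block, h.card_parts,
      h.card_part_le⟩

theorem mixedStirlingLe_eq_card_configs {m n k r : ℕ} {s : Finset α} (hs : #s = n) :
    mixedStirlingLe m n k r = #(configs m (k - 1) r s) := by
  subst hs
  let e : Fin #s ↪ α := s.equivFin.symm.toEmbedding.trans (.subtype _)
  have he : univ.map e = s := by simp [e, ← map_map, attach_map_val]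
  rw [mixedStirlingLe_eq_card_configs_univ, ← card_configs_map e, he]

theorem mixedStirlingLe_recurrence_general (n m k r : ℕ)
    (hn : 1 ≤ n) (hr : 1 ≤ r) :
    mixedStirlingLe m n k r =
      ∑ i ∈ Finset.range m,
        (n - 1).choose i *
          ((k - 1) * mixedStirlingLe m (n - i - 1) (k - 1) r +
            mixedStirlingLe m (n - i - 1) k (r - 1)) := by
  obtain ⟨r, rfl⟩ := Nat.exists_eq_add_of_le' hr
  let a : Fin n := ⟨0, hn⟩
  calc mixedStirlingLe m n k (r + 1)
      = ∑ T ∈ blocksContaining m univ a, ((k - 1) *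
          mixedStirlingLe m (n - #T) (k - 1) (r + 1) + mixedStirlingLe m (n - #T) k r) := by
        rw [mixedStirlingLe_eq_card_configs (card_fin n), card_configs_succ (mem_univ a)]
        refine sum_congr rfl fun T _ => ?_
        have hT : #(univ \ T) = n - #T := by rw [card_univ_sdiff, Fintype.card_fin]
        rw [mixedStirlingLe_eq_card_configs hT, mixedStirlingLe_eq_card_configs hT]
    _ = _ := by
        rw [sum_blocksContaining (mem_univ a) fun t => (k - 1) *
          mixedStirlingLe m (n - t) (k - 1) (r + 1) + mixedStirlingLe m (n - t) k r]
        simp [Nat.sub_sub]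

theorem mixedStirlingLe_recurrence (n m k r : ℕ)
    (hn : 1 ≤ n) (hm : 1 ≤ m) (hk : 1 ≤ k) (hr : 1 ≤ r) :
    mixedStirlingLe m n k r =
      ∑ i ∈ Finset.range m,
        (n - 1).choose i *
          ((k - 1) * mixedStirlingLe m (n - i - 1) (k - 1) r +
            mixedStirlingLe m (n - i - 1) k (r - 1)) :=
  mixedStirlingLe_recurrence_general n m k r hn hr
end

section
/- For positive integers n, m, k and r, the mixed restricted Stirling numbers of the second kind satisfy S_{≤m}(n,k,r) = S_{≤m}(n−1,k,r−1) + (k−1)·S_{≤m}(n−1,k−1,r) + (k+r−1)·S_{≤m}(n−1,k,r) − (n−1 choose m)·S_{≤m}(n−m−1,k,r−1) − (k−1)·(n−1 choose m)·S_{≤m}(n−m−1,k−1,r), where terms whose first argument is negative are taken to be 0, the binomial coefficient (n−1 choose m) is 0 when m > n−1, and the terms carrying the factor (k−1) are taken to be 0 when k = 1. -/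
open Finset Function
open scoped Nat

lemma Nat.card_subtype_eq_and_add_and_not {γ : Type*} [Finite γ] (p q : γ → Prop) :
    Nat.card {x // p x} = Nat.card {x // p x ∧ q x} + Nat.card {x // p x ∧ ¬q x} := by
  classical
  rw [← Nat.card_sum]
  exact Nat.card_congr <| (Equiv.sumCompl fun x : {x // p x} => q x).symm.trans <|
    (Equiv.subtypeSubtypeEquivSubtypeInter p q).sumCongr
      (Equiv.subtypeSubtypeEquivSubtypeInter p fun x => ¬q x)

namespace MixedStirling

section Fiber

variable {α β : Type*} [Fintype α] [DecidableEq β]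

def fiber (f : α → β) (b : β) : Finset α := {a | f a = b}

@[simp] lemma mem_fiber {f : α → β} {b : β} {a : α} : a ∈ fiber f b ↔ f a = b := by
  simp [fiber]

lemma disjoint_fiber {f : α → β} {b b' : β} (h : b ≠ b') : Disjoint (fiber f b) (fiber f b') :=
  disjoint_left.2 fun _ ha ha' => h ((mem_fiber.1 ha).symm.trans (mem_fiber.1 ha'))

lemma fiber_injective {f : α → β} (hf : Surjective f) : Injective (fiber f) := by
  intro b b' h
  obtain ⟨a, rfl⟩ := hf b
  exact mem_fiber.1 (h ▸ mem_fiber.2 rfl)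

lemma eq_of_fiber_eq {f g : α → β} (h : ∀ b, fiber f b = fiber g b) : f = g :=
  funext fun a => (mem_fiber.1 (h (f a) ▸ mem_fiber.2 rfl)).symm

lemma exists_fiber_eq {F : β → Finset α} (hF : ∀ a, ∃! b, a ∈ F b) :
    ∃ f : α → β, ∀ b, fiber f b = F b := by
  choose f hf huniq using hF
  exact ⟨f, fun b => ext fun a =>
    ⟨fun h => mem_fiber.1 h ▸ hf a, fun h => mem_fiber.2 (huniq a b h).symm⟩⟩

lemma card_fiber_conj {α' β' : Type*} [Fintype α'] [DecidableEq β'] (e : α ≃ α') (e' : β ≃ β')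
    (f : α → β) (b : β') : #(fiber (e' ∘ f ∘ e.symm) b) = #(fiber f (e'.symm b)) :=
  card_equiv e.symm fun a => by simp [Equiv.eq_symm_apply]

lemma card_fiber_elim' (c : β) (g : α → β) (b : β) :
    #(fiber (Option.elim' c g) b) = #(fiber g b) + if c = b then 1 else 0 := by
  simp only [fiber, card_filter, Fintype.sum_option, Option.elim'_none, Option.elim'_some]
  exact add_comm _ _

def IsBoundedSurj (m : ℕ) (f : α → β) : Prop :=
  ∀ b, #(fiber f b) ∈ Set.Icc 1 m

lemma IsBoundedSurj.surjective {m : ℕ} {f : α → β} (hf : IsBoundedSurj m f) : Surjective f := by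
  intro b
  obtain ⟨a, ha⟩ := card_pos.1 (hf b).1
  exact ⟨a, mem_fiber.1 ha⟩

lemma isBoundedSurj_iff_of_ne {m : ℕ} {f : α → β} (c : β) :
    IsBoundedSurj m f ↔ #(fiber f c) ∈ Set.Icc 1 m ∧ ∀ b ≠ c, #(fiber f b) ∈ Set.Icc 1 m :=
  ⟨fun hf => ⟨hf c, fun b _ => hf b⟩, fun ⟨hc, hf⟩ b => by
    obtain rfl | hb := eq_or_ne b c
    exacts [hc, hf b hb]⟩

lemma isBoundedSurj_conj_iff {α' β' : Type*} [Fintype α'] [DecidableEq β'] {m : ℕ}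
    (e : α ≃ α') (e' : β ≃ β') {f : α → β} :
    IsBoundedSurj m (e' ∘ f ∘ e.symm) ↔ IsBoundedSurj m f := by
  simp only [IsBoundedSurj, card_fiber_conj]
  exact ⟨fun h b => by simpa using h (e' b), fun h b => h _⟩

end Fiber

noncomputable def boundedSurjCount (m a t : ℕ) : ℕ :=
  Nat.card {f : Fin a → Fin t // IsBoundedSurj m f}

lemma card_isBoundedSurj (m : ℕ) (α β : Type*) [Fintype α] [Fintype β] [DecidableEq β] :
    Nat.card {f : α → β // IsBoundedSurj m f} =
      boundedSurjCount m (Fintype.card α) (Fintype.card β) :=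
  Nat.card_congr <| ((Fintype.equivFin α).arrowCongr (Fintype.equivFin β)).subtypeEquiv
    fun _ => (isBoundedSurj_conj_iff _ _).symm

section Recurrence

variable {α β : Type*} [Fintype α] [DecidableEq β] {m : ℕ}

lemma mem_iff_of_fiber_eq {f : α → β} {b : β} {S : Finset α} (h : fiber f b = S) {a : α} :
    a ∈ S ↔ f a = b := by
  rw [← h, mem_fiber]

def restrictFiberEquiv [DecidableEq α] (c : β) (S : Finset α) :
    {g : α → β // fiber g c = S} ≃ ({a // a ∉ S} → {b // b ≠ c}) where
  toFun g a := ⟨g.1 a, fun h => a.2 ((mem_iff_of_fiber_eq g.2).2 h)⟩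
  invFun h := ⟨fun a => if ha : a ∈ S then c else h ⟨a, ha⟩, by
    ext a
    by_cases ha : a ∈ S <;> simp [ha, (h _).2]⟩
  left_inv g := by
    ext a
    by_cases ha : a ∈ S
    · simp [ha, ((mem_iff_of_fiber_eq g.2).1 ha).symm]
    · simp [ha]
  right_inv h := by
    ext a
    simp [a.2]

lemma card_fiber_restrictFiberEquiv [DecidableEq α] {c : β} {S : Finset α}
    (g : {g : α → β // fiber g c = S}) (b : {b // b ≠ c}) :
    #(fiber (restrictFiberEquiv c S g) b) = #(fiber g.1 b) := by
  refine card_bij (fun a _ => a.1) (by simp [restrictFiberEquiv, Subtype.ext_iff])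
    (fun _ _ _ _ => Subtype.ext) fun a ha => ?_
  have haS : a ∉ S := fun h => b.2 (mem_fiber.1 ha ▸ (mem_iff_of_fiber_eq g.2).1 h)
  exact ⟨⟨a, haS⟩, by simpa [restrictFiberEquiv, Subtype.ext_iff] using ha, rfl⟩

lemma isBoundedSurj_restrictFiberEquiv_iff [DecidableEq α] {c : β} {S : Finset α}
    (g : {g : α → β // fiber g c = S}) :
    IsBoundedSurj m (restrictFiberEquiv c S g) ↔ ∀ b ≠ c, #(fiber g.1 b) ∈ Set.Icc 1 m := by
  simp only [IsBoundedSurj, card_fiber_restrictFiberEquiv, Subtype.forall]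

lemma isBoundedSurj_elim'_iff {c : β} {g : α → β} :
    IsBoundedSurj m (Option.elim' c g) ↔
      #(fiber g c) + 1 ≤ m ∧ ∀ b ≠ c, #(fiber g b) ∈ Set.Icc 1 m := by
  simp only [isBoundedSurj_iff_of_ne c, card_fiber_elim', if_pos, Set.mem_Icc]
  refine and_congr (by omega) (forall₂_congr fun b hb => ?_)
  simp [Ne.symm hb]

lemma isBoundedSurj_elim'_and_fiber_ne_empty_iff {c : β} {g : α → β} :
    IsBoundedSurj m (Option.elim' c g) ∧ ¬fiber g c = ∅ ↔
      IsBoundedSurj m g ∧ ¬#(fiber g c) = m := by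
  rw [isBoundedSurj_elim'_iff, isBoundedSurj_iff_of_ne c, ← ne_eq, ← nonempty_iff_ne_empty,
    ← card_pos, Set.mem_Icc]
  constructor
  · rintro ⟨⟨hc, hb⟩, hpos⟩
    exact ⟨⟨⟨hpos, by omega⟩, hb⟩, by omega⟩
  · rintro ⟨⟨⟨hpos, hle⟩, hb⟩, hne⟩
    exact ⟨⟨by omega, hb⟩, hpos⟩

variable [DecidableEq α] [Fintype β]

lemma card_fiber_eq_and_forall_ne (c : β) (S : Finset α) :
    Nat.card {g : α → β // fiber g c = S ∧ ∀ b ≠ c, #(fiber g b) ∈ Set.Icc 1 m} =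
      boundedSurjCount m (Fintype.card α - #S) (Fintype.card β - 1) := by
  have hα : Fintype.card {a // a ∉ S} = Fintype.card α - #S := by
    simp [Fintype.card_subtype_compl]
  have hβ : Fintype.card {b // b ≠ c} = Fintype.card β - 1 := by
    simp [Fintype.card_subtype_compl]
  rw [← hα, ← hβ, ← card_isBoundedSurj]
  exact Nat.card_congr <| (Equiv.subtypeSubtypeEquivSubtypeInter _ _).symm.trans <|
    (restrictFiberEquiv c S).subtypeEquiv fun g => (isBoundedSurj_restrictFiberEquiv_iff g).symm

lemma card_fiber_eq_and_isBoundedSurj (c : β) {S : Finset α} (hS : #S ∈ Set.Icc 1 m) :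
    Nat.card {g : α → β // fiber g c = S ∧ IsBoundedSurj m g} =
      boundedSurjCount m (Fintype.card α - #S) (Fintype.card β - 1) := by
  rw [← card_fiber_eq_and_forall_ne]
  refine Nat.card_congr <| Equiv.subtypeEquivRight fun g => and_congr_right fun hg => ?_
  rw [isBoundedSurj_iff_of_ne c, hg]
  exact and_iff_right hS

lemma card_isBoundedSurj_and_card_fiber_eq (hm : 1 ≤ m) (c : β) :
    Nat.card {g : α → β // IsBoundedSurj m g ∧ #(fiber g c) = m} =
      (Fintype.card α).choose m * boundedSurjCount m (Fintype.card α - m) (Fintype.card β - 1) := by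
  let e : {g : α → β // IsBoundedSurj m g ∧ #(fiber g c) = m} ≃
      Σ S : {S : Finset α // #S = m}, {g : α → β // fiber g c = S ∧ IsBoundedSurj m g} :=
    { toFun g := ⟨⟨fiber g.1 c, g.2.2⟩, g.1, rfl, g.2.1⟩
      invFun x := ⟨x.2.1, x.2.2.2, by rw [x.2.2.1]; exact x.1.2⟩
      left_inv _ := rfl
      right_inv x := Sigma.subtype_ext (Subtype.ext x.2.2.1) rfl }
  have hcard (S : {S : Finset α // #S = m}) : #S.1 ∈ Set.Icc 1 m := by
    rw [S.2]
    exact ⟨hm, le_rfl⟩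
  rw [Nat.card_congr e, Nat.card_sigma,
    sum_congr rfl fun S _ => (card_fiber_eq_and_isBoundedSurj c (hcard S)).trans (by rw [S.2])]
  simp [Fintype.card_finset_len]

lemma card_isBoundedSurj_elim'_and_fiber_eq_empty (hm : 1 ≤ m) (c : β) :
    Nat.card {g : α → β // IsBoundedSurj m (Option.elim' c g) ∧ fiber g c = ∅} =
      boundedSurjCount m (Fintype.card α) (Fintype.card β - 1) := by
  rw [← Nat.sub_zero (Fintype.card α), ← card_empty (α := α), ← card_fiber_eq_and_forall_ne c]
  refine Nat.card_congr <| Equiv.subtypeEquivRight fun g => ?_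
  rw [isBoundedSurj_elim'_iff, and_comm, and_congr_right_iff]
  intro hg
  rw [hg, card_empty]
  exact and_iff_right hm

lemma card_isBoundedSurj_elim'_add (hm : 1 ≤ m) (c : β) :
    Nat.card {g : α → β // IsBoundedSurj m (Option.elim' c g)} +
        (Fintype.card α).choose m * boundedSurjCount m (Fintype.card α - m) (Fintype.card β - 1) =
      boundedSurjCount m (Fintype.card α) (Fintype.card β) +
        boundedSurjCount m (Fintype.card α) (Fintype.card β - 1) := by
  rw [Nat.card_subtype_eq_and_add_and_not _ (fiber · c = ∅),
    card_isBoundedSurj_elim'_and_fiber_eq_empty hm,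
    Nat.card_congr (Equiv.subtypeEquivRight fun _ => isBoundedSurj_elim'_and_fiber_ne_empty_iff),
    ← card_isBoundedSurj_and_card_fiber_eq hm c, ← card_isBoundedSurj,
    Nat.card_subtype_eq_and_add_and_not (IsBoundedSurj m) fun g => #(fiber g c) = m]
  ring

def optionArrowSubtypeEquiv (p : (Option α → β) → Prop) :
    {f // p f} ≃ Σ c : β, {g : α → β // p (Option.elim' c g)} where
  toFun f := ⟨f.1 none, f.1 ∘ some, by rw [Option.elim'_none_some]; exact f.2⟩
  invFun x := ⟨Option.elim' x.1 x.2.1, x.2.2⟩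
  left_inv f := Subtype.ext (Option.elim'_none_some f.1)
  right_inv _ := rfl

end Recurrence

theorem boundedSurjCount_succ_succ {m : ℕ} (hm : 1 ≤ m) (N T : ℕ) :
    boundedSurjCount m (N + 1) (T + 1) + (T + 1) * (N.choose m * boundedSurjCount m (N - m) T) =
      (T + 1) * (boundedSurjCount m N (T + 1) + boundedSurjCount m N T) := by
  have hc := card_isBoundedSurj_elim'_add (α := Fin N) (β := Fin (T + 1)) hm
  simp only [Fintype.card_fin, Nat.add_sub_cancel] at hc
  have hsum := Fintype.sum_congr _ _ hc
  rw [sum_add_distrib] at hsum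
  simp only [sum_const, card_univ, Fintype.card_fin, smul_eq_mul] at hsum
  rw [← hsum, ← Nat.card_sigma, ← Nat.card_congr (optionArrowSubtypeEquiv _), card_isBoundedSurj,
    Fintype.card_option, Fintype.card_fin, Fintype.card_fin]

section Config

variable {α ι κ : Type*} [Fintype α] [DecidableEq α] [Fintype ι] {m r : ℕ}

def MixedConfig (m r : ℕ) (α ι : Type*) [Fintype α] [DecidableEq α] [Fintype ι] : Type _ :=
  {x : Σ B : ι → Finset α, Finpartition ((univ : Finset α) \ univ.biUnion B) //
    (∀ i, (x.1 i).Nonempty) ∧ (∀ i, (x.1 i).card ≤ m) ∧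
    (∀ i j, i ≠ j → Disjoint (x.1 i) (x.1 j)) ∧
    x.2.parts.card = r ∧ ∀ p ∈ x.2.parts, p.card ≤ m}

lemma mixedStirlingLe_succ_eq (m n K r : ℕ) :
    mixedStirlingLe m n (K + 1) r = Nat.card (MixedConfig m r (Fin n) (Fin K)) :=
  rfl

lemma MixedConfig.ext {x y : MixedConfig m r α ι} (hB : x.1.1 = y.1.1)
    (hparts : x.1.2.parts = y.1.2.parts) : x = y := by
  obtain ⟨⟨B, P⟩, hx⟩ := x
  obtain ⟨⟨B', P'⟩, hy⟩ := y
  dsimp only at hB hparts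
  subst hB
  congr
  exact Finpartition.ext hparts

lemma MixedConfig.existsUnique_mem (x : MixedConfig m r α ι) (e : κ ≃ x.1.2.parts) (a : α) :
    ∃! j, a ∈ Sum.elim x.1.1 (fun c => (e c).1) j := by
  by_cases ha : a ∈ (univ : Finset α) \ univ.biUnion x.1.1
  · obtain ⟨p, ⟨hp, hap⟩, -⟩ := x.1.2.existsUnique_mem ha
    refine ⟨.inr (e.symm ⟨p, hp⟩), by simpa using hap, ?_⟩
    rintro (i | c) h
    · exact absurd (mem_biUnion.2 ⟨i, mem_univ i, h⟩) (mem_sdiff.1 ha).2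
    · have hcp : (e c).1 = p := x.1.2.eq_of_mem_parts (e c).2 hp h hap
      simp [← hcp]
  · obtain ⟨i, hi⟩ : ∃ i, a ∈ x.1.1 i := by simpa using ha
    refine ⟨.inl i, hi, ?_⟩
    rintro (i' | c) h
    · by_contra hne
      exact disjoint_left.1 (x.2.2.2.1 i' i fun h' => hne (congrArg _ h')) h hi
    · exact absurd (x.1.2.le (e c).2 h) ha

instance : Finite (MixedConfig m r α ι) := by
  unfold MixedConfig
  infer_instance

variable [DecidableEq ι] [DecidableEq κ]

lemma mem_sdiff_biUnion_fiber_inl {f : α → ι ⊕ κ} {a : α} :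
    a ∈ (univ : Finset α) \ univ.biUnion (fun i => fiber f (.inl i)) ↔ ∃ c, f a = .inr c := by
  cases h : f a <;> simp [h]

variable [Fintype κ]

def fiberPartition (f : α → ι ⊕ κ) (hf : Surjective f) :
    Finpartition ((univ : Finset α) \ univ.biUnion (fun i => fiber f (.inl i))) :=
  .ofExistsUnique (univ.image fun c => fiber f (.inr c))
    (by
      simp only [mem_image, mem_univ, true_and, forall_exists_index, forall_apply_eq_imp_iff]
      intro c a ha
      exact mem_sdiff_biUnion_fiber_inl.2 ⟨c, mem_fiber.1 ha⟩)
    (by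
      intro a ha
      obtain ⟨c, hc⟩ := mem_sdiff_biUnion_fiber_inl.1 ha
      refine ⟨fiber f (.inr c), ⟨mem_image_of_mem _ (mem_univ c), mem_fiber.2 hc⟩, ?_⟩
      simp only [mem_image, mem_univ, true_and, and_imp, forall_exists_index]
      rintro _ c' rfl ha'
      rw [← hc, ← mem_fiber.1 ha'])
    (by
      simp only [mem_image, mem_univ, true_and, not_exists]
      intro c hc
      obtain ⟨a, ha⟩ := hf (.inr c)
      simpa [hc] using (mem_fiber.2 ha : a ∈ fiber f (.inr c)))

def toMixedConfig (f : {f : α → ι ⊕ κ // IsBoundedSurj m f}) :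
    MixedConfig m (Fintype.card κ) α ι :=
  ⟨⟨fun i => fiber f.1 (.inl i), fiberPartition f.1 f.2.surjective⟩,
    fun i => card_pos.1 (f.2 _).1,
    fun i => (f.2 _).2,
    fun _ _ hij => disjoint_fiber (Sum.inl_injective.ne hij),
    by
      rw [fiberPartition, Finpartition.ofExistsUnique_parts, card_image_of_injective _
        fun _ _ h => Sum.inr_injective (fiber_injective f.2.surjective h), card_univ],
    by
      simp only [fiberPartition, Finpartition.ofExistsUnique_parts, mem_image, mem_univ, true_and,
        forall_exists_index, forall_apply_eq_imp_iff]
      exact fun c => (f.2 _).2⟩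

lemma fiber_inr_mem_parts {x : MixedConfig m (Fintype.card κ) α ι}
    {f : {f : α → ι ⊕ κ // IsBoundedSurj m f}} (hfx : toMixedConfig f = x) (c : κ) :
    fiber f.1 (.inr c) ∈ x.1.2.parts := by
  subst hfx
  exact mem_image_of_mem _ (mem_univ c)

lemma bijective_fiber_inr {x : MixedConfig m (Fintype.card κ) α ι}
    {f : {f : α → ι ⊕ κ // IsBoundedSurj m f}} (hfx : toMixedConfig f = x) :
    Bijective fun c => (⟨fiber f.1 (.inr c), fiber_inr_mem_parts hfx c⟩ : x.1.2.parts) := by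
  subst hfx
  refine ⟨fun c c' h => Sum.inr_injective (fiber_injective f.2.surjective
    (congrArg Subtype.val h)), fun ⟨p, hp⟩ => ?_⟩
  obtain ⟨c, -, rfl⟩ := mem_image.1 hp
  exact ⟨c, rfl⟩

noncomputable def partLabeling {x : MixedConfig m (Fintype.card κ) α ι}
    (f : {f : {f : α → ι ⊕ κ // IsBoundedSurj m f} // toMixedConfig f = x}) : κ ≃ x.1.2.parts :=
  .ofBijective _ (bijective_fiber_inr f.2)

lemma partLabeling_bijective (x : MixedConfig m (Fintype.card κ) α ι) :
    Bijective (partLabeling (x := x)) := by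
  refine ⟨fun f f' h => ?_, fun e => ?_⟩
  · have hinl (i : ι) : fiber f.1.1 (.inl i) = fiber f'.1.1 (.inl i) :=
      congrArg (fun y => y.1.1 i) (f.2.trans f'.2.symm)
    have hinr (c : κ) : fiber f.1.1 (.inr c) = fiber f'.1.1 (.inr c) :=
      congrArg Subtype.val (Equiv.ext_iff.1 h c)
    exact Subtype.ext (Subtype.ext (eq_of_fiber_eq (Sum.forall.2 ⟨hinl, hinr⟩)))
  · obtain ⟨f, hf⟩ := exists_fiber_eq (x.existsUnique_mem e)
    have hgood : IsBoundedSurj m f := by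
      refine Sum.forall.2 ⟨fun i => ?_, fun c => ?_⟩ <;> rw [hf]
      · exact ⟨card_pos.2 (x.2.1 i), x.2.2.1 i⟩
      · exact ⟨card_pos.2 (x.1.2.nonempty_of_mem_parts (e c).2), x.2.2.2.2.2 _ (e c).2⟩
    have hx : toMixedConfig ⟨f, hgood⟩ = x := by
      refine MixedConfig.ext (funext fun i => hf (.inl i)) ?_
      ext p
      simp only [toMixedConfig, fiberPartition, Finpartition.ofExistsUnique_parts, mem_image,
        mem_univ, true_and, hf, Sum.elim_inr]
      exact ⟨fun ⟨c, hc⟩ => hc ▸ (e c).2, fun hp => ⟨e.symm ⟨p, hp⟩, by simp⟩⟩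
    exact ⟨⟨⟨f, hgood⟩, hx⟩, Equiv.ext fun c => Subtype.ext (hf (.inr c))⟩

lemma card_toMixedConfig_fiber (x : MixedConfig m (Fintype.card κ) α ι) :
    Nat.card {f : {f : α → ι ⊕ κ // IsBoundedSurj m f} // toMixedConfig f = x} =
      (Fintype.card κ)! := by
  have hcard : Fintype.card κ = Fintype.card x.1.2.parts := by
    rw [Fintype.card_coe, x.2.2.2.2.1]
  rw [Nat.card_congr (.ofBijective _ (partLabeling_bijective x)), Nat.card_eq_fintype_card,
    Fintype.card_equiv (Fintype.equivOfCardEq hcard)]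

theorem card_isBoundedSurj_sum :
    Nat.card {f : α → ι ⊕ κ // IsBoundedSurj m f} =
      Nat.card (MixedConfig m (Fintype.card κ) α ι) * (Fintype.card κ)! := by
  have := Fintype.ofFinite (MixedConfig m (Fintype.card κ) α ι)
  rw [← Nat.card_congr (Equiv.sigmaFiberEquiv toMixedConfig), Nat.card_sigma,
    sum_congr rfl fun x _ => card_toMixedConfig_fiber x, sum_const, card_univ, smul_eq_mul,
    Nat.card_eq_fintype_card]

end Config

theorem factorial_mul_mixedStirlingLe_succ (m n K r : ℕ) :
    r ! * mixedStirlingLe m n (K + 1) r = boundedSurjCount m n (K + r) := by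
  have h := card_isBoundedSurj_sum (m := m) (α := Fin n) (ι := Fin K) (κ := Fin r)
  simp only [card_isBoundedSurj, Fintype.card_fin, Fintype.card_sum] at h
  rw [h, mixedStirlingLe_succ_eq, mul_comm]

theorem mul_factorial_mul_mixedStirlingLe (m n K r : ℕ) :
    K * ((r + 1)! * mixedStirlingLe m n K (r + 1)) = K * boundedSurjCount m n (K + r) := by
  obtain _ | K := K
  · simp
  · rw [factorial_mul_mixedStirlingLe_succ, Nat.add_right_comm, Nat.add_assoc]

end MixedStirling

open MixedStirling in
theorem mixedStirlingLe_recurrence' (n m k r : ℕ)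
    (hn : 1 ≤ n) (hm : 1 ≤ m) (hk : 1 ≤ k) (hr : 1 ≤ r) :
    (mixedStirlingLe m n k r : ℤ) =
      (mixedStirlingLe m (n - 1) k (r - 1) : ℤ) +
        (k - 1 : ℕ) * (mixedStirlingLe m (n - 1) (k - 1) r : ℤ) +
        (k + r - 1 : ℕ) * (mixedStirlingLe m (n - 1) k r : ℤ) -
        ((n - 1).choose m : ℤ) * (mixedStirlingLe m (n - m - 1) k (r - 1) : ℤ) -
        (k - 1 : ℕ) * ((n - 1).choose m : ℤ) *
          (mixedStirlingLe m (n - m - 1) (k - 1) r : ℤ) := by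
  obtain ⟨K, rfl⟩ : ∃ K, k = K + 1 := ⟨k - 1, by omega⟩
  obtain ⟨R, rfl⟩ : ∃ R, r = R + 1 := ⟨r - 1, by omega⟩
  obtain ⟨N, rfl⟩ : ∃ N, n = N + 1 := ⟨n - 1, by omega⟩
  simp only [Nat.add_sub_cancel, show K + 1 + (R + 1) - 1 = K + R + 1 by omega,
    show N + 1 - m - 1 = N - m by omega]
  refine mul_left_cancel₀ (Nat.cast_ne_zero.2 (R + 1).factorial_ne_zero : ((R + 1)! : ℤ) ≠ 0) ?_
  have hrec := boundedSurjCount_succ_succ hm N (K + R)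
  have h₁ := factorial_mul_mixedStirlingLe_succ m (N + 1) K (R + 1)
  have h₂ := factorial_mul_mixedStirlingLe_succ m N K (R + 1)
  have h₃ := factorial_mul_mixedStirlingLe_succ m N K R
  have h₄ := factorial_mul_mixedStirlingLe_succ m (N - m) K R
  have h₅ := mul_factorial_mul_mixedStirlingLe m N K R
  have h₆ := mul_factorial_mul_mixedStirlingLe m (N - m) K R
  have hfac : ((R + 1)! : ℤ) = (R + 1) * R ! := by push_cast [Nat.factorial_succ]; ring
  rw [← Nat.add_assoc] at h₁ h₂
  zify at hrec h₁ h₂ h₃ h₄ h₅ h₆ ⊢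
  linear_combination h₁ - (K + R + 1 : ℤ) * h₂ - (R + 1 : ℤ) * h₃ - h₅ + hrec
    + (N.choose m : ℤ) * ((R + 1 : ℤ) * h₄ + h₆)
    - (mixedStirlingLe m N (K + 1) R - N.choose m * mixedStirlingLe m (N - m) (K + 1) R : ℤ) * hfac
end

section
/- For positive integers n, k, m and integers 1 ≤ s ≤ r, the mixed restricted Stirling numbers of the second kind satisfy the convolution identity (r choose s) · S_{≤m}(n,k,r) = Σ_{j=0}^{n} (n choose j) · {n−j brace s}_{≤m} · S_{≤m}(j,k,r−s). -/
open Finset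

namespace Finset

theorem disjoint_of_disjoint_sup_id {γ : Type*} [Lattice γ] [OrderBot γ] {Q R : Finset γ}
    (hQ : ⊥ ∉ Q) (h : Disjoint (Q.sup id) (R.sup id)) : Disjoint Q R :=
  disjoint_left.2 fun _ hqQ hqR =>
    hQ (disjoint_self.1 (h.mono (le_sup (f := id) hqQ) (le_sup (f := id) hqR)) ▸ hqQ)

theorem sup_id_sdiff_of_pairwiseDisjoint {γ : Type*} [GeneralizedBooleanAlgebra γ]
    [DecidableEq γ] {P S : Finset γ} (hP : (P : Set γ).PairwiseDisjoint id) (hS : S ⊆ P) :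
    (P \ S).sup id = P.sup id \ S.sup id :=
  calc (P \ S).sup id = (S.sup id ⊔ (P \ S).sup id) \ S.sup id :=
        ((supIndep_iff_pairwiseDisjoint.2 hP).disjoint_sup_sup hS sdiff_subset
          disjoint_sdiff).sup_sdiff_cancel_left.symm
    _ = P.sup id \ S.sup id := by rw [← sup_union, union_sdiff_of_subset hS]

theorem sup_id_map_mapEmbedding {α β : Type*} [DecidableEq α] [DecidableEq β] (f : α ↪ β)
    (P : Finset (Finset α)) : (P.map (mapEmbedding f).toEmbedding).sup id = (P.sup id).map f := by
  rw [sup_map, apply_sup_eq_sup_comp (map f) (fun _ _ => map_union _ _) (map_empty f)]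
  rfl

end Finset

section BoundedPartitions

variable {α β : Type*} [DecidableEq α] [DecidableEq β] {m : ℕ}

variable (m) in
def boundedPartitions (u : Finset α) (r : ℕ) : Finset (Finset (Finset α)) :=
  {Q ∈ u.powerset.powerset | (∀ p ∈ Q, ∀ q ∈ Q, p ≠ q → Disjoint p q) ∧ ∅ ∉ Q ∧
    Q.sup id = u ∧ #Q = r ∧ ∀ q ∈ Q, #q ≤ m}

theorem mem_boundedPartitions {u : Finset α} {r : ℕ} {Q : Finset (Finset α)} :
    Q ∈ boundedPartitions m u r ↔ (Q : Set (Finset α)).PairwiseDisjoint id ∧ ∅ ∉ Q ∧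
      Q.sup id = u ∧ #Q = r ∧ ∀ q ∈ Q, #q ≤ m := by
  refine mem_filter.trans ⟨fun h => h.2, fun h => ⟨?_, h⟩⟩
  simp only [mem_powerset]
  exact fun q hq => mem_powerset.2 (h.2.2.1 ▸ le_sup (f := id) hq)

variable (m) in
def finpartitionEquivBoundedPartitions (u : Finset α) (r : ℕ) :
    {P : Finpartition u // #P.parts = r ∧ ∀ B ∈ P.parts, #B ≤ m} ≃ boundedPartitions m u r where
  toFun P := ⟨P.1.parts, mem_boundedPartitions.2
    ⟨P.1.disjoint, P.1.bot_notMem, P.1.sup_parts, P.2⟩⟩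
  invFun Q :=
    have hQ := mem_boundedPartitions.1 Q.2
    ⟨⟨Q.1, supIndep_iff_pairwiseDisjoint.2 hQ.1, hQ.2.2.1, hQ.2.1⟩, hQ.2.2.2⟩
  left_inv _ := rfl
  right_inv _ := rfl

theorem card_boundedPartitions_eq_natCard (u : Finset α) (r : ℕ) :
    #(boundedPartitions m u r) =
      Nat.card {P : Finpartition u // #P.parts = r ∧ ∀ B ∈ P.parts, #B ≤ m} := by
  rw [Nat.card_congr (finpartitionEquivBoundedPartitions m u r), Nat.card_eq_finsetCard]

theorem map_mem_boundedPartitions_map_iff (f : α ↪ β) {u : Finset α} {r : ℕ}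
    {P : Finset (Finset α)} :
    P.map (mapEmbedding f).toEmbedding ∈ boundedPartitions m (u.map f) r ↔
      P ∈ boundedPartitions m u r := by
  simp only [mem_boundedPartitions, Set.PairwiseDisjoint, Set.Pairwise, coe_map,
    Set.forall_mem_image, mem_coe, Function.onFun, id, RelEmbedding.coe_toEmbedding,
    mapEmbedding_apply, map_inj, disjoint_map, sup_id_map_mapEmbedding, card_map, mem_map,
    map_eq_empty, exists_eq_right, forall_exists_index, and_imp, forall_apply_eq_imp_iff₂, ne_eq]

theorem boundedPartitions_map (f : α ↪ β) (u : Finset α) (r : ℕ) :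
    boundedPartitions m (u.map f) r =
      (boundedPartitions m u r).map (mapEmbedding (mapEmbedding f).toEmbedding).toEmbedding := by
  ext Q
  refine ⟨fun hQ => ?_, ?_⟩
  · have hQu : Q ⊆ u.powerset.map (mapEmbedding f).toEmbedding := fun q hq => by
      have hq : q ⊆ u.map f := (mem_boundedPartitions.1 hQ).2.2.1 ▸ le_sup (f := id) hq
      obtain ⟨p, hp, rfl⟩ := subset_map_iff.1 hq
      exact mem_map_of_mem _ (mem_powerset.2 hp)
    obtain ⟨P, -, rfl⟩ := subset_map_iff.1 hQu
    exact mem_map_of_mem _ ((map_mem_boundedPartitions_map_iff f).1 hQ)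
  · simp only [mem_map, RelEmbedding.coe_toEmbedding, mapEmbedding_apply]
    rintro ⟨P, hP, rfl⟩
    exact (map_mem_boundedPartitions_map_iff f).2 hP

theorem card_boundedPartitions (u : Finset α) (r : ℕ) :
    #(boundedPartitions m u r) = stirlingLe m #u r := by
  obtain ⟨f, hf⟩ := Function.Embedding.exists_of_card_eq_finset (Fintype.card_fin #u)
  calc #(boundedPartitions m u r) = #(boundedPartitions m (univ.map f) r) := by rw [hf]
    _ = stirlingLe m #u r := by
      rw [boundedPartitions_map, card_map, card_boundedPartitions_eq_natCard, stirlingLe]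

theorem mem_boundedPartitions_sup_of_subset {u : Finset α} {r : ℕ} {P S : Finset (Finset α)}
    (hP : P ∈ boundedPartitions m u r) (hS : S ⊆ P) : S ∈ boundedPartitions m (S.sup id) #S := by
  obtain ⟨hdisj, hempty, -, -, hcard⟩ := mem_boundedPartitions.1 hP
  exact mem_boundedPartitions.2
    ⟨hdisj.subset hS, fun h => hempty (hS h), rfl, rfl, fun q hq => hcard q (hS hq)⟩

theorem sdiff_mem_boundedPartitions {u : Finset α} {r : ℕ} {P S : Finset (Finset α)}
    (hP : P ∈ boundedPartitions m u r) (hS : S ⊆ P) :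
    P \ S ∈ boundedPartitions m (u \ S.sup id) (r - #S) := by
  obtain ⟨hdisj, hempty, hsup, hr, hcard⟩ := mem_boundedPartitions.1 hP
  refine mem_boundedPartitions.2 ⟨hdisj.subset sdiff_subset, fun h => hempty (sdiff_subset h),
    ?_, by rw [card_sdiff_of_subset hS, hr], fun q hq => hcard q (sdiff_subset hq)⟩
  rw [sup_id_sdiff_of_pairwiseDisjoint hdisj hS, hsup]

theorem disjoint_of_mem_boundedPartitions {U V : Finset α} {s t : ℕ} {Q R : Finset (Finset α)}
    (hQ : Q ∈ boundedPartitions m U s) (hR : R ∈ boundedPartitions m V t) (hUV : Disjoint U V) :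
    Disjoint Q R := by
  obtain ⟨-, hempty, hsup, -⟩ := mem_boundedPartitions.1 hQ
  exact disjoint_of_disjoint_sup_id hempty
    (hsup ▸ (mem_boundedPartitions.1 hR).2.2.1 ▸ hUV)

theorem union_mem_boundedPartitions {U V : Finset α} {s t : ℕ} {Q R : Finset (Finset α)}
    (hQ : Q ∈ boundedPartitions m U s) (hR : R ∈ boundedPartitions m V t) (hUV : Disjoint U V) :
    Q ∪ R ∈ boundedPartitions m (U ∪ V) (s + t) := by
  obtain ⟨hdisjQ, hemptyQ, hsupQ, hs, hcardQ⟩ := mem_boundedPartitions.1 hQ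
  obtain ⟨hdisjR, hemptyR, hsupR, ht, hcardR⟩ := mem_boundedPartitions.1 hR
  refine mem_boundedPartitions.2 ⟨?_, by simp [hemptyQ, hemptyR],
    by rw [sup_union, hsupQ, hsupR]; rfl,
    by rw [card_union_of_disjoint (disjoint_of_mem_boundedPartitions hQ hR hUV), hs, ht],
    forall_mem_union.2 ⟨hcardQ, hcardR⟩⟩
  rw [coe_union]
  exact hdisjQ.union hdisjR fun p hp q hq _ =>
    hUV.mono (hsupQ ▸ le_sup (f := id) hp) (hsupR ▸ le_sup (f := id) hq)

theorem choose_mul_card_boundedPartitions {s r : ℕ} (hsr : s ≤ r) (u : Finset α) :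
    r.choose s * #(boundedPartitions m u r) =
      ∑ U ∈ u.powerset, #(boundedPartitions m U s) * #(boundedPartitions m (u \ U) (r - s)) := by
  calc r.choose s * #(boundedPartitions m u r)
      = #((boundedPartitions m u r).sigma fun P => P.powersetCard s) := by
        rw [card_sigma, mul_comm, ← smul_eq_mul, ← sum_const]
        refine sum_congr rfl fun P hP => ?_
        rw [card_powersetCard, (mem_boundedPartitions.1 hP).2.2.2.1]
    _ = #(u.powerset.sigma fun U =>
          boundedPartitions m U s ×ˢ boundedPartitions m (u \ U) (r - s)) := by
        refine card_nbij' (fun x => ⟨x.2.sup id, x.2, x.1 \ x.2⟩) (fun y => ⟨y.2.1 ∪ y.2.2, y.2.1⟩)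
          ?_ ?_ ?_ ?_
        · rintro ⟨P, S⟩ h
          simp only [coe_sigma, Set.mem_sigma_iff, mem_coe, mem_powersetCard] at h
          obtain ⟨hP, hSP, rfl⟩ := h
          simp only [coe_sigma, Set.mem_sigma_iff, mem_coe, mem_powerset, mem_product]
          exact ⟨(mem_boundedPartitions.1 hP).2.2.1 ▸ sup_mono hSP,
            mem_boundedPartitions_sup_of_subset hP hSP, sdiff_mem_boundedPartitions hP hSP⟩
        · rintro ⟨U, Q, R⟩ h
          simp only [coe_sigma, Set.mem_sigma_iff, mem_coe, mem_powerset, mem_product] at h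
          obtain ⟨hU, hQ, hR⟩ := h
          simp only [coe_sigma, Set.mem_sigma_iff, mem_coe, mem_powersetCard]
          refine ⟨?_, subset_union_left, (mem_boundedPartitions.1 hQ).2.2.2.1⟩
          simpa [union_sdiff_of_subset hU, Nat.add_sub_cancel' hsr] using
            union_mem_boundedPartitions hQ hR disjoint_sdiff
        · rintro ⟨P, S⟩ h
          simp only [coe_sigma, Set.mem_sigma_iff, mem_coe, mem_powersetCard] at h
          simp [union_sdiff_of_subset h.2.1]
        · rintro ⟨U, Q, R⟩ h
          simp only [coe_sigma, Set.mem_sigma_iff, mem_coe, mem_powerset, mem_product] at h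
          obtain ⟨hU, hQ, hR⟩ := h
          simp [(mem_boundedPartitions.1 hQ).2.2.1,
            union_sdiff_cancel_left (disjoint_of_mem_boundedPartitions hQ hR disjoint_sdiff)]
    _ = _ := by simp only [card_sigma, card_product]

end BoundedPartitions

section MixedStirling

variable {α β : Type*} [DecidableEq α] [DecidableEq β] {m : ℕ}
variable {ι : Type*} [Fintype ι] [DecidableEq ι]

variable (m ι) in
def blockFamilies (u : Finset α) : Finset (ι → Finset α) :=
  {B ∈ Fintype.piFinset fun _ => u.powerset |
    (∀ i, (B i).Nonempty) ∧ (∀ i, #(B i) ≤ m) ∧ ∀ i j, i ≠ j → Disjoint (B i) (B j)}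

theorem mem_blockFamilies {u : Finset α} {B : ι → Finset α} :
    B ∈ blockFamilies m ι u ↔ (∀ i, B i ⊆ u) ∧ (∀ i, (B i).Nonempty) ∧ (∀ i, #(B i) ≤ m) ∧
      ∀ i j, i ≠ j → Disjoint (B i) (B j) := by
  simp [blockFamilies]

variable (m ι) in
/-- `S_{≤ m}(n, k, r)` on the ground set `u`, with the blocks `B_2, …, B_k` indexed by `ι`. -/
def mixedStirlingLeOn (u : Finset α) (r : ℕ) : ℕ :=
  ∑ B ∈ blockFamilies m ι u, #(boundedPartitions m (u \ univ.biUnion B) r)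

theorem mixedStirlingLe_eq_mixedStirlingLeOn (n k r : ℕ) :
    mixedStirlingLe m n k r = mixedStirlingLeOn m (Fin (k - 1)) (univ : Finset (Fin n)) r := by
  let e : {x : Σ B : Fin (k - 1) → Finset (Fin n), Finpartition (univ \ univ.biUnion B) //
      (∀ i, (x.1 i).Nonempty) ∧ (∀ i, #(x.1 i) ≤ m) ∧
      (∀ i j, i ≠ j → Disjoint (x.1 i) (x.1 j)) ∧ #x.2.parts = r ∧ ∀ p ∈ x.2.parts, #p ≤ m} ≃
      Σ B : blockFamilies m (Fin (k - 1)) univ,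
        {P : Finpartition (univ \ univ.biUnion B.1) // #P.parts = r ∧ ∀ p ∈ P.parts, #p ≤ m} :=
    { toFun x := ⟨⟨x.1.1, mem_blockFamilies.2
          ⟨fun _ => subset_univ _, x.2.1, x.2.2.1, x.2.2.2.1⟩⟩, x.1.2, x.2.2.2.2⟩
      invFun y :=
        have hB := mem_blockFamilies.1 y.1.2
        ⟨⟨y.1.1, y.2.1⟩, hB.2.1, hB.2.2.1, hB.2.2.2, y.2.2⟩
      left_inv _ := rfl
      right_inv _ := rfl }
  rw [mixedStirlingLe, Nat.card_congr e, Nat.card_sigma, mixedStirlingLeOn,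
    ← sum_coe_sort (blockFamilies m _ univ)]
  simp only [card_boundedPartitions_eq_natCard]

theorem blockFamilies_map (f : α ↪ β) (u : Finset α) :
    blockFamilies m ι (u.map f) =
      (blockFamilies m ι u).map
        (Function.Embedding.piCongrRight fun _ => (mapEmbedding f).toEmbedding) := by
  ext B'
  simp only [mem_map]
  constructor
  · intro hB'
    obtain ⟨hsub, hne, hcard, hdisj⟩ := mem_blockFamilies.1 hB'
    choose B hBu hB using fun i => subset_map_iff.1 (hsub i)
    obtain rfl : B' = fun i => (B i).map f := funext hB
    refine ⟨B, mem_blockFamilies.2 ⟨hBu, fun i => ?_, fun i => ?_, fun i j hij => ?_⟩, rfl⟩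
    · simpa using hne i
    · simpa using hcard i
    · simpa using hdisj i j hij
  · rintro ⟨B, hB, rfl⟩
    obtain ⟨hsub, hne, hcard, hdisj⟩ := mem_blockFamilies.1 hB
    exact mem_blockFamilies.2 ⟨fun i => map_subset_map.2 (hsub i), fun i => (hne i).map,
      fun i => (card_map f).trans_le (hcard i), fun i j hij => (disjoint_map f).2 (hdisj i j hij)⟩

theorem mixedStirlingLeOn_map (f : α ↪ β) (u : Finset α) (r : ℕ) :
    mixedStirlingLeOn m ι (u.map f) r = mixedStirlingLeOn m ι u r := by
  rw [mixedStirlingLeOn, blockFamilies_map, sum_map]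
  refine sum_congr rfl fun B _ => ?_
  have hground : u.map f \ univ.biUnion (fun i => (B i).map f) = (u \ univ.biUnion B).map f := by
    rw [Finset.map_sdiff]
    simp only [map_eq_image, biUnion_image]
  change #(boundedPartitions m (u.map f \ univ.biUnion fun i => (B i).map f) r) = _
  rw [hground, boundedPartitions_map, card_map]

theorem mixedStirlingLeOn_eq_mixedStirlingLe (u : Finset α) (k r : ℕ) :
    mixedStirlingLeOn m (Fin (k - 1)) u r = mixedStirlingLe m #u k r := by
  obtain ⟨f, hf⟩ := Function.Embedding.exists_of_card_eq_finset (Fintype.card_fin #u)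
  calc mixedStirlingLeOn m (Fin (k - 1)) u r
      = mixedStirlingLeOn m (Fin (k - 1)) (univ.map f) r := by rw [hf]
    _ = mixedStirlingLe m #u k r := by
      rw [mixedStirlingLeOn_map, mixedStirlingLe_eq_mixedStirlingLeOn]

theorem choose_mul_mixedStirlingLeOn {s r : ℕ} (hsr : s ≤ r) (u : Finset α) :
    r.choose s * mixedStirlingLeOn m ι u r =
      ∑ U ∈ u.powerset, #(boundedPartitions m U s) * mixedStirlingLeOn m ι (u \ U) (r - s) := by
  have hswap : ∀ B U, B ∈ blockFamilies m ι u ∧ U ∈ (u \ univ.biUnion B).powerset ↔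
      B ∈ blockFamilies m ι (u \ U) ∧ U ∈ u.powerset := by
    intro B U
    simp only [mem_blockFamilies, mem_powerset, subset_sdiff, disjoint_comm (a := U),
      disjoint_biUnion_left, mem_univ, true_implies, forall_and]
    tauto
  simp only [mixedStirlingLeOn, mul_sum, choose_mul_card_boundedPartitions hsr]
  rw [sum_comm' hswap]
  refine sum_congr rfl fun U _ => sum_congr rfl fun B _ => ?_
  rw [sdiff_sdiff_comm]

end MixedStirling

theorem mixedStirlingLe_convolution_general (n k m s r : ℕ) (hsr : s ≤ r) :
    r.choose s * mixedStirlingLe m n k r =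
      ∑ j ∈ Finset.range (n + 1),
        n.choose j * stirlingLe m (n - j) s * mixedStirlingLe m j k (r - s) := by
  rw [mixedStirlingLe_eq_mixedStirlingLeOn, choose_mul_mixedStirlingLeOn hsr]
  simp only [card_boundedPartitions, mixedStirlingLeOn_eq_mixedStirlingLe,
    card_sdiff_of_subset (subset_univ _), card_univ, Fintype.card_fin]
  rw [sum_powerset_apply_card (fun i => stirlingLe m i s * mixedStirlingLe m (n - i) k (r - s)),
    card_univ, Fintype.card_fin, ← sum_range_reflect]
  refine sum_congr rfl fun j hj => ?_
  have hjn : j ≤ n := Nat.lt_succ_iff.1 (mem_range.1 hj)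
  rw [add_tsub_cancel_right, Nat.choose_symm hjn, Nat.sub_sub_self hjn, smul_eq_mul, mul_assoc]

theorem mixedStirlingLe_convolution (n k m s r : ℕ)
    (hn : 1 ≤ n) (hk : 1 ≤ k) (hm : 1 ≤ m) (hs : 1 ≤ s) (hsr : s ≤ r) :
    r.choose s * mixedStirlingLe m n k r =
      ∑ j ∈ Finset.range (n + 1),
        n.choose j * stirlingLe m (n - j) s * mixedStirlingLe m j k (r - s) :=
  mixedStirlingLe_convolution_general n k m s r hsr
end

section
/- For positive integers n, r, m and integers 1 ≤ s ≤ k−1 (with k ≥ 2), the mixed restricted Stirling numbers of the second kind satisfy the convolution identity S_{≤m}(n,k,r) = Σ_{j=0}^{n} (n choose j) · s! · {n−j brace s}_{≤m} · S_{≤m}(j,k−s,r). -/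
/-!
Split the `k - 1` labelled blocks of a mixed object into the first `s` and the remaining
`k - 1 - s`. The first `s` blocks are an ordered partition of their union `U`, which can be any
subset: each of the `{#U brace s}_{≤m}` partitions of `U` arises from `s!` orderings. The
remaining labelled blocks together with the unlabelled partition form a mixed object on the
complement of `U`. Both counts depend only on cardinalities, so grouping the subsets `U` by size
produces the binomial coefficients.
-/

open Finset Function

theorem Nat.card_subtype_eq_of_injective {X Y : Type*} {p : X → Prop} {q : Y → Prop}
    (g : X → Y) (hg : Injective g) (h : ∀ y, q y ↔ ∃ x, p x ∧ g x = y) :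
    Nat.card {y // q y} = Nat.card {x // p x} := by
  have hset : {y | q y} = g '' {x | p x} := Set.ext h
  exact (congrArg (fun t : Set Y => Nat.card t) hset).trans (Nat.card_image_of_injective hg _)

theorem Nat.card_eq_sum_card_fiber {X Y : Type*} [Finite X] [Fintype Y] (g : X → Y) :
    Nat.card X = ∑ y, Nat.card {x // g x = y} := by
  rw [← Nat.card_sigma, Nat.card_congr (Equiv.sigmaFiberEquiv g)]

section Definitions

variable {α : Type*} [DecidableEq α]

/- Partitions are handled as families of finsets subject to explicit conditions rather than as
`Finpartition`s, so that they can be transported along embeddings. -/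
structure IsRestrictedPartition (m r : ℕ) (A : Finset α) (P : Finset (Finset α)) : Prop where
  sup_id_eq : P.sup id = A
  pairwiseDisjoint : (P : Set (Finset α)).PairwiseDisjoint id
  empty_notMem : ∅ ∉ P
  card_eq : #P = r
  card_le : ∀ p ∈ P, #p ≤ m

structure IsRestrictedBlocks (m : ℕ) {t : ℕ} (C : Fin t → Finset α) : Prop where
  nonempty : ∀ i, (C i).Nonempty
  card_le : ∀ i, #(C i) ≤ m
  pairwise_disjoint : Pairwise (Disjoint on C)

structure IsRestrictedMixed (m r : ℕ) (A : Finset α) {t : ℕ}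
    (y : (Fin t → Finset α) × Finset (Finset α)) : Prop where
  subset : ∀ i, y.1 i ⊆ A
  blocks : IsRestrictedBlocks m y.1
  partition : IsRestrictedPartition m r (A \ univ.biUnion y.1) y.2

noncomputable def partitionCount (m r : ℕ) (A : Finset α) : ℕ :=
  Nat.card {P // IsRestrictedPartition m r A P}

noncomputable def mixedCount (m r t : ℕ) (A : Finset α) : ℕ :=
  Nat.card {y : (Fin t → Finset α) × Finset (Finset α) // IsRestrictedMixed m r A y}

end Definitions

namespace IsRestrictedPartition

variable {α : Type*} [DecidableEq α] {m r : ℕ} {A : Finset α} {P : Finset (Finset α)}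

theorem _root_.Finpartition.isRestrictedPartition (Q : Finpartition A) (hr : #Q.parts = r)
    (hm : ∀ p ∈ Q.parts, #p ≤ m) : IsRestrictedPartition m r A Q.parts :=
  ⟨Q.sup_parts, supIndep_iff_pairwiseDisjoint.mp Q.supIndep, Q.empty_notMem_parts, hr, hm⟩

def toFinpartition (h : IsRestrictedPartition m r A P) : Finpartition A :=
  ⟨P, supIndep_iff_pairwiseDisjoint.mpr h.pairwiseDisjoint, h.sup_id_eq, h.empty_notMem⟩

theorem subset {p : Finset α} (h : IsRestrictedPartition m r A P) (hp : p ∈ P) : p ⊆ A :=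
  h.sup_id_eq ▸ le_sup (f := id) hp

end IsRestrictedPartition

theorem stirlingLe_eq_partitionCount (m n k : ℕ) :
    stirlingLe m n k = partitionCount m k (univ : Finset (Fin n)) :=
  Nat.card_congr
    { toFun Q := ⟨Q.1.parts, Q.1.isRestrictedPartition Q.2.1 Q.2.2⟩
      invFun P := ⟨P.2.toFinpartition, P.2.card_eq, P.2.card_le⟩
      left_inv _ := Subtype.ext (Finpartition.ext rfl)
      right_inv _ := rfl }

theorem mixedStirlingLe_eq_mixedCount (m n k r : ℕ) :
    mixedStirlingLe m n k r = mixedCount m r (k - 1) (univ : Finset (Fin n)) :=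
  Nat.card_congr
    { toFun x := ⟨(x.1.1, x.1.2.parts), fun _ => subset_univ _, ⟨x.2.1, x.2.2.1, x.2.2.2.1⟩,
        x.1.2.isRestrictedPartition x.2.2.2.2.1 x.2.2.2.2.2⟩
      invFun y := ⟨⟨y.1.1, y.2.partition.toFinpartition⟩, y.2.blocks.nonempty,
        y.2.blocks.card_le, y.2.blocks.pairwise_disjoint, y.2.partition.card_eq,
        y.2.partition.card_le⟩
      left_inv _ := Subtype.ext (Sigma.ext rfl (heq_of_eq (Finpartition.ext rfl)))
      right_inv _ := rfl }

section Relabel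

variable {α β : Type*} (f : β ↪ α) {m r : ℕ}

theorem Finset.exists_eq_map_mapEmbedding {S : Finset β} {Q : Finset (Finset α)}
    (h : ∀ q ∈ Q, q ⊆ S.map f) :
    ∃ P : Finset (Finset β), Q = P.map (mapEmbedding f).toEmbedding := by
  have hQ : Q ⊆ S.powerset.map (mapEmbedding f).toEmbedding := fun q hq => by
    obtain ⟨u, hu, rfl⟩ := subset_map_iff.mp (h q hq)
    exact mem_map_of_mem _ (mem_powerset.2 hu)
  obtain ⟨P, -, rfl⟩ := subset_map_iff.mp hQ
  exact ⟨P, rfl⟩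

theorem isRestrictedBlocks_map_iff {t : ℕ} {C : Fin t → Finset β} :
    IsRestrictedBlocks m (fun i => (C i).map f) ↔ IsRestrictedBlocks m C :=
  ⟨fun h => ⟨fun i => map_nonempty.1 (h.nonempty i), fun i => by simpa using h.card_le i,
      fun _ _ hij => (disjoint_map f).1 (h.pairwise_disjoint hij)⟩,
    fun h => ⟨fun i => map_nonempty.2 (h.nonempty i), fun i => by simpa using h.card_le i,
      fun _ _ hij => (disjoint_map f).2 (h.pairwise_disjoint hij)⟩⟩

variable [DecidableEq α] [DecidableEq β]

theorem Finset.map_biUnion {ι : Type*} (s : Finset ι) (t : ι → Finset β) :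
    (s.biUnion t).map f = s.biUnion fun i => (t i).map f := by
  simp only [map_eq_image, biUnion_image]

theorem isRestrictedPartition_map_iff {S : Finset β} {P : Finset (Finset β)} :
    IsRestrictedPartition m r (S.map f) (P.map (mapEmbedding f).toEmbedding) ↔
      IsRestrictedPartition m r S P := by
  have hsup : (P.map (mapEmbedding f).toEmbedding).sup id = (P.sup id).map f := by
    rw [sup_map]
    exact (apply_sup_eq_sup_comp (map f) (fun _ _ => map_union _ _) rfl).symm
  have hdisj : (↑(P.map (mapEmbedding f).toEmbedding) : Set (Finset α)).PairwiseDisjoint id ↔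
      (P : Set (Finset β)).PairwiseDisjoint id := by
    rw [coe_map, (mapEmbedding f).toEmbedding.injective.injOn.pairwiseDisjoint_image]
    simp only [Set.PairwiseDisjoint, Set.Pairwise, onFun, comp_apply, id,
      RelEmbedding.coe_toEmbedding, mapEmbedding_apply, disjoint_map]
  have hempty : ∅ ∈ P.map (mapEmbedding f).toEmbedding ↔ ∅ ∈ P := by
    simp
  constructor
  · intro h
    exact ⟨map_injective f (hsup ▸ h.sup_id_eq), hdisj.1 h.pairwiseDisjoint,
      fun h0 => h.empty_notMem (hempty.2 h0), by simpa using h.card_eq,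
      fun p hp => by simpa using h.card_le _ (mem_map_of_mem _ hp)⟩
  · intro h
    exact ⟨by rw [hsup, h.sup_id_eq], hdisj.2 h.pairwiseDisjoint,
      fun h0 => h.empty_notMem (hempty.1 h0), by simpa using h.card_eq, by simpa using h.card_le⟩

theorem isRestrictedMixed_map_iff {t : ℕ} {S : Finset β} {C : Fin t → Finset β}
    {P : Finset (Finset β)} :
    IsRestrictedMixed m r (S.map f)
        ((fun i => (C i).map f), P.map (mapEmbedding f).toEmbedding) ↔
      IsRestrictedMixed m r S (C, P) := by
  have hground : S.map f \ univ.biUnion (fun i => (C i).map f) = (S \ univ.biUnion C).map f := by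
    rw [Finset.map_sdiff, map_biUnion]
  constructor
  · rintro ⟨hsub, hblocks, hpart⟩
    rw [hground] at hpart
    exact ⟨fun i => map_subset_map.1 (hsub i), (isRestrictedBlocks_map_iff f).1 hblocks,
      (isRestrictedPartition_map_iff f).1 hpart⟩
  · rintro ⟨hsub, hblocks, hpart⟩
    refine ⟨fun i => map_subset_map.2 (hsub i), (isRestrictedBlocks_map_iff f).2 hblocks, ?_⟩
    rw [hground]
    exact (isRestrictedPartition_map_iff f).2 hpart

theorem partitionCount_map (S : Finset β) :
    partitionCount m r (S.map f) = partitionCount m r S := by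
  refine Nat.card_subtype_eq_of_injective _ (map_injective (mapEmbedding f).toEmbedding)
    fun Q => ⟨fun hQ => ?_, ?_⟩
  · obtain ⟨P, rfl⟩ := exists_eq_map_mapEmbedding f fun q => hQ.subset
    exact ⟨P, (isRestrictedPartition_map_iff f).1 hQ, rfl⟩
  · rintro ⟨P, hP, rfl⟩
    exact (isRestrictedPartition_map_iff f).2 hP

theorem mixedCount_map (t : ℕ) (S : Finset β) :
    mixedCount m r t (S.map f) = mixedCount m r t S := by
  refine Nat.card_subtype_eq_of_injective
    (Prod.map (fun C i => (C i).map f) (map (mapEmbedding f).toEmbedding))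
    ((map_injective f).comp_left.prodMap (map_injective _)) fun ⟨D, Q⟩ => ⟨fun hDQ => ?_, ?_⟩
  · choose C hCS hC using fun i => subset_map_iff.mp (hDQ.subset i)
    obtain ⟨P, rfl⟩ := exists_eq_map_mapEmbedding f fun q hq =>
      (hDQ.partition.subset hq).trans sdiff_subset
    obtain rfl : D = fun i => (C i).map f := funext hC
    exact ⟨(C, P), (isRestrictedMixed_map_iff f).1 hDQ, rfl⟩
  · rintro ⟨⟨C, P⟩, hCP, hg⟩
    rw [← hg]
    exact (isRestrictedMixed_map_iff f).2 hCP

end Relabel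

section Transfer

variable {α : Type*} {m r : ℕ}

theorem Finset.exists_map_univ_eq (A : Finset α) : ∃ e : Fin #A ↪ α, univ.map e = A :=
  ⟨A.equivFin.symm.toEmbedding.trans (Embedding.subtype _), by
    rw [← map_map, univ_map_equiv_to_embedding, univ_eq_attach, attach_map_val]⟩

variable [DecidableEq α]

theorem partitionCount_eq_stirlingLe (A : Finset α) :
    partitionCount m r A = stirlingLe m #A r := by
  obtain ⟨e, he⟩ := A.exists_map_univ_eq
  rw [stirlingLe_eq_partitionCount, ← partitionCount_map e, he]

theorem mixedCount_eq_mixedStirlingLe (k : ℕ) (A : Finset α) :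
    mixedCount m r (k - 1) A = mixedStirlingLe m #A k r := by
  obtain ⟨e, he⟩ := A.exists_map_univ_eq
  rw [mixedStirlingLe_eq_mixedCount, ← mixedCount_map e, he]

end Transfer

theorem Fin.castAdd_ne_natAdd {s u : ℕ} (i : Fin s) (j : Fin u) : castAdd u i ≠ natAdd s j :=
  Fin.ne_of_lt (by simp only [Fin.lt_def, Fin.val_castAdd, Fin.val_natAdd]; omega)

theorem Fin.pairwise_iff_castAdd_natAdd {γ : Type*} {s u : ℕ} {R : γ → γ → Prop}
    [Std.Symm R] (D : Fin (s + u) → γ) :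
    Pairwise (R on D) ↔ Pairwise (R on fun i => D (castAdd u i)) ∧
      Pairwise (R on fun j => D (natAdd s j)) ∧ ∀ i j, R (D (castAdd u i)) (D (natAdd s j)) := by
  simp only [Pairwise, Fin.forall_fin_add, onFun, ne_eq, Fin.castAdd_inj, Fin.natAdd_inj,
    Fin.castAdd_ne_natAdd, (Fin.castAdd_ne_natAdd _ _).symm, not_false_eq_true, forall_const,
    forall_and]
  exact ⟨fun ⟨⟨h₁, _⟩, h₂, h₄⟩ => ⟨h₁, h₄, h₂⟩,
    fun ⟨h₁, h₄, h₂⟩ => ⟨⟨h₁, fun j i => Std.Symm.symm _ _ (h₂ i j)⟩, h₂, h₄⟩⟩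

theorem Finset.biUnion_univ_eq_union_castAdd_natAdd {γ : Type*} [DecidableEq γ] {s u : ℕ}
    (D : Fin (s + u) → Finset γ) :
    univ.biUnion D =
      univ.biUnion (fun i => D (Fin.castAdd u i)) ∪ univ.biUnion (fun j => D (Fin.natAdd s j)) := by
  ext x
  simp only [mem_union, mem_biUnion, mem_univ, true_and,
    ← not_forall_not (p := fun i : Fin (s + u) => x ∈ D i), Fin.forall_fin_add]
  simp only [not_and_or, not_forall, not_not]

theorem Finset.injective_of_image_univ_eq {γ : Type*} [DecidableEq γ] {t : ℕ} {C : Fin t → γ}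
    {P : Finset γ} (hC : univ.image C = P) (hP : #P = t) : Injective C := by
  rw [← Set.injOn_univ, ← coe_univ, ← card_image_iff, hC, hP, card_univ, Fintype.card_fin]

theorem Finset.natCard_image_univ_eq_factorial {γ : Type*} [DecidableEq γ] {t : ℕ} {P : Finset γ}
    (hP : #P = t) : Nat.card {C : Fin t → γ // univ.image C = P} = t.factorial := by
  have e : {C : Fin t → γ // univ.image C = P} ≃ (Fin t ≃ P) :=
    { toFun C :=
        Equiv.ofBijective (fun i => ⟨C.1 i, C.2.subset (mem_image_of_mem _ (mem_univ i))⟩)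
        ⟨fun i j h => injective_of_image_univ_eq C.2 hP (congrArg Subtype.val h), fun ⟨p, hp⟩ => by
          obtain ⟨i, -, rfl⟩ := mem_image.1 (C.2.superset hp)
          exact ⟨i, rfl⟩⟩
      invFun e := ⟨fun i => e i, by
        ext p
        simp only [mem_image, mem_univ, true_and]
        exact ⟨fun ⟨i, hi⟩ => by rw [← hi]; exact (e i).2, fun hp => ⟨e.symm ⟨p, hp⟩, by simp⟩⟩⟩
      left_inv _ := rfl
      right_inv _ := Equiv.ext fun _ => rfl }
  rw [Nat.card_congr e, Nat.card_eq_fintype_card,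
    Fintype.card_equiv (P.equivFin.trans (finCongr hP)).symm, Fintype.card_fin]

section Blocks

variable {α : Type*} {m : ℕ}

theorem IsRestrictedBlocks.injective {t : ℕ} {C : Fin t → Finset α}
    (h : IsRestrictedBlocks m C) : Injective C := by
  intro i j hij
  by_contra hne
  have hdisj := h.pairwise_disjoint hne
  rw [onFun, hij, disjoint_self_iff_empty] at hdisj
  exact (h.nonempty j).ne_empty hdisj

variable [DecidableEq α]

theorem IsRestrictedBlocks.isRestrictedPartition_image {t : ℕ} {C : Fin t → Finset α}
    (h : IsRestrictedBlocks m C) : IsRestrictedPartition m t (univ.biUnion C) (univ.image C) where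
  sup_id_eq := by rw [sup_image, id_comp, sup_eq_biUnion]
  pairwiseDisjoint := by
    rw [coe_image, h.injective.injOn.pairwiseDisjoint_image]
    exact fun i _ j _ hij => h.pairwise_disjoint hij
  empty_notMem := by
    simpa only [mem_image, mem_univ, true_and, not_exists] using fun i => (h.nonempty i).ne_empty
  card_eq := by rw [card_image_of_injective _ h.injective, card_univ, Fintype.card_fin]
  card_le := by simpa only [mem_image, mem_univ, true_and, forall_exists_index,
    forall_apply_eq_imp_iff] using h.card_le

theorem IsRestrictedPartition.isRestrictedBlocks_of_image_eq {r : ℕ} {A : Finset α}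
    {P : Finset (Finset α)} (hP : IsRestrictedPartition m r A P) {C : Fin r → Finset α}
    (hC : univ.image C = P) : IsRestrictedBlocks m C ∧ univ.biUnion C = A := by
  have hmem : ∀ i, C i ∈ P := fun i => hC ▸ mem_image_of_mem C (mem_univ i)
  have hinj : Injective C := injective_of_image_univ_eq hC hP.card_eq
  refine ⟨⟨fun i => nonempty_iff_ne_empty.2 fun h => hP.empty_notMem (h ▸ hmem i),
    fun i => hP.card_le _ (hmem i),
    fun i j hij => hP.pairwiseDisjoint (hmem i) (hmem j) (hinj.ne hij)⟩, ?_⟩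
  rw [← hP.sup_id_eq, ← hC, sup_image, id_comp, sup_eq_biUnion]

theorem natCard_isRestrictedBlocks_biUnion_eq [Fintype α] (t : ℕ) (A : Finset α) :
    Nat.card {C : Fin t → Finset α // IsRestrictedBlocks m C ∧ univ.biUnion C = A} =
      t.factorial * partitionCount m t A := by
  classical
  let g (C : {C : Fin t → Finset α // IsRestrictedBlocks m C ∧ univ.biUnion C = A}) :
      {P // IsRestrictedPartition m t A P} :=
    ⟨univ.image C.1, by simpa only [C.2.2] using C.2.1.isRestrictedPartition_image⟩
  have hfiber (P : {P // IsRestrictedPartition m t A P}) :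
      Nat.card {C // g C = P} = t.factorial := by
    rw [← natCard_image_univ_eq_factorial P.2.card_eq]
    exact Nat.card_congr ((Equiv.subtypeEquivRight fun C => Subtype.ext_iff).trans
      (Equiv.subtypeSubtypeEquivSubtype fun hC => P.2.isRestrictedBlocks_of_image_eq hC))
  rw [Nat.card_eq_sum_card_fiber g, sum_congr rfl fun P _ => hfiber P, sum_const, card_univ,
    smul_eq_mul, mul_comm, partitionCount, Nat.card_eq_fintype_card]

end Blocks

section Split

variable {α : Type*} {m r : ℕ}

theorem isRestrictedBlocks_iff_castAdd_natAdd {s u : ℕ} {D : Fin (s + u) → Finset α} :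
    IsRestrictedBlocks m D ↔ IsRestrictedBlocks m (fun i => D (Fin.castAdd u i)) ∧
      IsRestrictedBlocks m (fun j => D (Fin.natAdd s j)) ∧
      ∀ i j, Disjoint (D (Fin.castAdd u i)) (D (Fin.natAdd s j)) := by
  constructor
  · rintro ⟨hne, hcard, hdisj⟩
    obtain ⟨hdisj₁, hdisj₂, hdisj₁₂⟩ := (Fin.pairwise_iff_castAdd_natAdd D).1 hdisj
    exact ⟨⟨fun _ => hne _, fun _ => hcard _, hdisj₁⟩, ⟨fun _ => hne _, fun _ => hcard _, hdisj₂⟩,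
      hdisj₁₂⟩
  · rintro ⟨⟨hne₁, hcard₁, hdisj₁⟩, ⟨hne₂, hcard₂, hdisj₂⟩, hdisj₁₂⟩
    exact ⟨Fin.forall_fin_add _ |>.2 ⟨hne₁, hne₂⟩, Fin.forall_fin_add _ |>.2 ⟨hcard₁, hcard₂⟩,
      (Fin.pairwise_iff_castAdd_natAdd D).2 ⟨hdisj₁, hdisj₂, hdisj₁₂⟩⟩

variable [DecidableEq α]

theorem isRestrictedMixed_univ_iff [Fintype α] {s u : ℕ} {D : Fin (s + u) → Finset α}
    {P : Finset (Finset α)} :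
    IsRestrictedMixed m r univ (D, P) ↔ IsRestrictedBlocks m (fun i => D (Fin.castAdd u i)) ∧
      IsRestrictedMixed m r (univ \ univ.biUnion fun i => D (Fin.castAdd u i))
        ((fun j => D (Fin.natAdd s j)), P) := by
  have hground : univ \ univ.biUnion D = (univ \ univ.biUnion fun i => D (Fin.castAdd u i)) \
      univ.biUnion fun j => D (Fin.natAdd s j) := by
    rw [sdiff_sdiff_left, biUnion_univ_eq_union_castAdd_natAdd, sup_eq_union]
  have hsub : (∀ j, D (Fin.natAdd s j) ⊆ univ \ univ.biUnion fun i => D (Fin.castAdd u i)) ↔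
      ∀ i j, Disjoint (D (Fin.castAdd u i)) (D (Fin.natAdd s j)) := by
    simp only [subset_sdiff, subset_univ, true_and, disjoint_biUnion_right, mem_univ,
      forall_const]
    exact ⟨fun h i j => (h j i).symm, fun h j i => (h i j).symm⟩
  constructor
  · rintro ⟨-, hD, hP⟩
    obtain ⟨h₁, h₂, h₁₂⟩ := isRestrictedBlocks_iff_castAdd_natAdd.1 hD
    exact ⟨h₁, hsub.2 h₁₂, h₂, hground ▸ hP⟩
  · rintro ⟨h₁, hsub₂, h₂, hP⟩
    exact ⟨fun _ => subset_univ _, isRestrictedBlocks_iff_castAdd_natAdd.2 ⟨h₁, h₂, hsub.1 hsub₂⟩,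
      hground ▸ hP⟩

theorem mixedCount_add_eq_sum [Fintype α] (s u : ℕ) :
    mixedCount m r (s + u) (univ : Finset α) =
      ∑ U : Finset α, s.factorial * partitionCount m s U * mixedCount m r u (univ \ U) := by
  let split : (Fin s → Finset α) × (Fin u → Finset α) × Finset (Finset α) → Prop := fun x =>
    IsRestrictedBlocks m x.1 ∧ IsRestrictedMixed m r (univ \ univ.biUnion x.1) x.2
  let e := ((Fin.appendEquiv (α := Finset α) s u).symm.prodCongr (.refl _)).trans
    (Equiv.prodAssoc _ _ (Finset (Finset α)))
  rw [mixedCount, Nat.card_congr (e.subtypeEquiv (p := IsRestrictedMixed m r univ) (q := split)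
      fun _ => isRestrictedMixed_univ_iff),
    Nat.card_eq_sum_card_fiber fun x => univ.biUnion x.1.1]
  refine sum_congr rfl fun U _ => ?_
  rw [← natCard_isRestrictedBlocks_biUnion_eq, mixedCount, ← Nat.card_prod]
  refine Nat.card_congr ((Equiv.subtypeSubtypeEquivSubtypeInter split
    (fun x => univ.biUnion x.1 = U)).trans ((Equiv.subtypeEquivRight fun x => ?_).trans
      (Equiv.subtypeProdEquivProd (p := fun C => IsRestrictedBlocks m C ∧ univ.biUnion C = U)
        (q := IsRestrictedMixed m r (univ \ U)))))
  constructor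
  · rintro ⟨⟨h₁, h₂⟩, rfl⟩
    exact ⟨⟨h₁, rfl⟩, h₂⟩
  · rintro ⟨⟨h₁, rfl⟩, h₂⟩
    exact ⟨⟨h₁, h₂⟩, rfl⟩

end Split

theorem mixedStirlingLe_convolution'_general (n r m k s : ℕ) (hsk : s ≤ k - 1) :
    mixedStirlingLe m n k r =
      ∑ j ∈ Finset.range (n + 1),
        n.choose j * s.factorial * stirlingLe m (n - j) s *
          mixedStirlingLe m j (k - s) r := by
  have hk : k - 1 = s + (k - s - 1) := by omega
  have hterm (U : Finset (Fin n)) :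
      s.factorial * partitionCount m s U * mixedCount m r (k - s - 1) (univ \ U) =
        s.factorial * stirlingLe m (n - #Uᶜ) s * mixedStirlingLe m #Uᶜ (k - s) r := by
    rw [partitionCount_eq_stirlingLe, mixedCount_eq_mixedStirlingLe, ← compl_eq_univ_sdiff,
      card_compl, Fintype.card_fin,
      Nat.sub_sub_self ((card_le_univ U).trans_eq (Fintype.card_fin n))]
  rw [mixedStirlingLe_eq_mixedCount, hk, mixedCount_add_eq_sum,
    Fintype.sum_bijective compl compl_involutive.bijective _
      (fun V => s.factorial * stirlingLe m (n - #V) s * mixedStirlingLe m #V (k - s) r) hterm,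
    ← powerset_univ,
    sum_powerset_apply_card
      (fun j => s.factorial * stirlingLe m (n - j) s * mixedStirlingLe m j (k - s) r),
    card_univ, Fintype.card_fin]
  simp only [smul_eq_mul, mul_assoc]

theorem mixedStirlingLe_convolution' (n r m k s : ℕ)
    (hn : 1 ≤ n) (hr : 1 ≤ r) (hm : 1 ≤ m) (hk : 2 ≤ k) (hs : 1 ≤ s) (hsk : s ≤ k - 1) :
    mixedStirlingLe m n k r =
      ∑ j ∈ Finset.range (n + 1),
        n.choose j * s.factorial * stirlingLe m (n - j) s *
          mixedStirlingLe m j (k - s) r :=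
  mixedStirlingLe_convolution'_general n r m k s hsk
end

section
/- For positive integers n, k, m and r, the mixed restricted Stirling numbers of the second kind satisfy r · S_{≤m}(n,k,r) = Σ_{j=1}^{m} (n choose j) · S_{≤m}(n−j,k,r−1), where the binomial coefficient (n choose j) is 0 for j > n and terms whose first argument n−j is negative are taken to be 0 (terms with j > n−k−r+2 vanish automatically). -/
open Finset

lemma Finset.sum_powerset_filter_card_mem {α M : Type*} [AddCommMonoid M] (s : Finset α)
    (I : Finset ℕ) (g : ℕ → M) :
    ∑ p ∈ s.powerset with #p ∈ I, g #p = ∑ j ∈ I, (#s).choose j • g j := by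
  rw [← sum_fiberwise_of_maps_to (g := card) fun p hp ↦ (mem_filter.1 hp).2]
  refine sum_congr rfl fun j hj ↦ ?_
  have hfiber : {p ∈ {p ∈ s.powerset | #p ∈ I} | #p = j} = powersetCard j s := by
    rw [filter_filter, powersetCard_eq_filter]
    exact filter_congr fun p _ ↦ ⟨And.right, fun h ↦ ⟨h ▸ hj, h⟩⟩
  rw [hfiber, sum_congr rfl fun p hp ↦ by rw [(mem_powersetCard.1 hp).2], sum_const,
    card_powersetCard]

namespace Finpartition

variable {α : Type*} [GeneralizedBooleanAlgebra α] [DecidableEq α] {a b : α}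

def erasePart (P : Finpartition a) (hb : b ∈ P.parts) : Finpartition (a \ b) :=
  P.ofSubset (erase_subset b P.parts) <| by
    have hdisj : Disjoint b ((P.parts.erase b).sup id) :=
      P.supIndep (erase_subset _ _) hb (notMem_erase _ _)
    have hsup : b ⊔ (P.parts.erase b).sup id = a := by
      have := P.sup_parts
      rwa [← insert_erase hb, sup_insert, id_eq] at this
    exact hdisj.sup_sdiff_cancel_left.symm.trans (congrArg (· \ b) hsup)

end Finpartition

/-- The action on subsets of a bijection from `s` onto `toFun s`. Only these laws are kept,
rather than a map `α → β`, so that the preimage under an embedding `α ↪ β` is a relabelling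
from `β` to `α` even when `α` is empty and no map `β → α` exists. -/
structure Relabelling {α : Type*} [DecidableEq α] (s : Finset α) (β : Type*) [DecidableEq β] :
    Type _ where
  toFun : Finset α → Finset β
  map_union : ∀ t u, toFun (t ∪ u) = toFun t ∪ toFun u
  map_sdiff : ∀ t u, toFun (t \ u) = toFun t \ toFun u
  card_map : ∀ t ⊆ s, #(toFun t) = #t

namespace Relabelling

variable {α β : Type*} [DecidableEq α] [DecidableEq β]

instance {s : Finset α} : CoeFun (Relabelling s β) fun _ ↦ Finset α → Finset β :=
  ⟨toFun⟩

def map (e : α ↪ β) (s : Finset α) : Relabelling s β where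
  toFun := Finset.map e
  map_union := Finset.map_union
  map_sdiff := Finset.map_sdiff
  card_map _ _ := Finset.card_map e

noncomputable def preimage (e : α ↪ β) (s : Finset β) (hs : ↑s ⊆ Set.range e) :
    Relabelling s α where
  toFun t := t.preimage e e.injective.injOn
  map_union t u := by ext; simp only [mem_preimage, mem_union]
  map_sdiff t u := by ext; simp only [mem_preimage, mem_sdiff]
  card_map t ht := by
    classical
    rw [card_preimage, filter_true_of_mem fun b hb ↦ hs (ht hb)]

section

variable {s : Finset α} (f : Relabelling s β)

@[simp]
lemma map_empty : f ∅ = ∅ := by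
  simpa using f.map_sdiff ∅ ∅

lemma disjoint {t u : Finset α} (h : Disjoint t u) : Disjoint (f t) (f u) := by
  rw [← Finset.sdiff_eq_self_iff_disjoint, ← f.map_sdiff, Finset.sdiff_eq_self_iff_disjoint.2 h]

lemma monotone : Monotone f := fun t u htu ↦ by
  rw [← union_eq_right.2 htu, f.map_union]
  exact subset_union_left

lemma map_biUnion {ι : Type*} (I : Finset ι) (B : ι → Finset α) :
    f (I.biUnion B) = I.biUnion (f ∘ B) := by
  rw [← sup_eq_biUnion, ← sup_eq_biUnion]
  exact apply_sup_eq_sup_comp f f.map_union f.map_empty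

lemma injOn : Set.InjOn f s.powerset := by
  have key : ∀ {t u}, t ⊆ s → f t = f u → t ⊆ u := fun {t u} ht htu ↦ by
    have : #(t \ u) = 0 := by
      rw [← f.card_map _ (sdiff_subset.trans ht), f.map_sdiff, htu, Finset.sdiff_self, card_empty]
    simpa using this
  intro t ht u hu htu
  rw [mem_coe, mem_powerset] at ht hu
  exact (key ht htu).antisymm (key hu htu.symm)

lemma nonempty_iff {t : Finset α} (ht : t ⊆ s) : (f t).Nonempty ↔ t.Nonempty := by
  rw [← card_pos, f.card_map t ht, card_pos]

def finpartition {t : Finset α} (ht : t ⊆ s) (P : Finpartition t) : Finpartition (f t) where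
  parts := P.parts.image f
  supIndep := by
    rw [supIndep_iff_pairwiseDisjoint, coe_image]
    rintro _ ⟨p, hp, rfl⟩ _ ⟨q, hq, rfl⟩ hpq
    exact f.disjoint (P.disjoint hp hq fun h ↦ hpq (congrArg f h))
  sup_parts := by
    rw [sup_image, Function.id_comp]
    exact P.sup_parts_apply f.map_union f.map_empty
  bot_notMem := by
    rintro hbot
    obtain ⟨p, hp, hfp⟩ := mem_image.1 hbot
    have := (f.nonempty_iff ((P.le hp).trans ht)).2 (P.nonempty_of_mem_parts hp)
    simp [hfp] at this

lemma card_parts_finpartition {t : Finset α} (ht : t ⊆ s) (P : Finpartition t) :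
    #(f.finpartition ht P).parts = #P.parts :=
  card_image_of_injOn fun _ hp _ hq ↦
    f.injOn (mem_powerset.2 ((P.le hp).trans ht)) (mem_powerset.2 ((P.le hq).trans ht))

end

end Relabelling

/-- The objects counted by `mixedStirlingLe`, on an arbitrary ground set `s`: `blocks` are
`B_2, …, B_k` and `partition` is `π`. -/
structure MixedConfig (m k r : ℕ) {α : Type*} [DecidableEq α] (s : Finset α) where
  blocks : Fin (k - 1) → Finset α
  partition : Finpartition (s \ univ.biUnion blocks)
  blocks_nonempty : ∀ i, (blocks i).Nonempty
  card_blocks_le : ∀ i, #(blocks i) ≤ m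
  blocks_subset : ∀ i, blocks i ⊆ s
  disjoint_blocks : ∀ i j, i ≠ j → Disjoint (blocks i) (blocks j)
  card_parts : #partition.parts = r
  card_le_of_mem_parts : ∀ p ∈ partition.parts, #p ≤ m

lemma mixedStirlingLe_eq_card (m n k r : ℕ) :
    mixedStirlingLe m n k r = Nat.card (MixedConfig m k r (univ : Finset (Fin n))) :=
  Nat.card_congr
    { toFun x := ⟨x.1.1, x.1.2, x.2.1, x.2.2.1, fun _ ↦ subset_univ _, x.2.2.2.1,
        x.2.2.2.2.1, x.2.2.2.2.2⟩
      invFun x := ⟨⟨x.blocks, x.partition⟩, x.blocks_nonempty, x.card_blocks_le,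
        x.disjoint_blocks, x.card_parts, x.card_le_of_mem_parts⟩
      left_inv _ := rfl
      right_inv _ := rfl }

namespace MixedConfig

variable {α β : Type*} [DecidableEq α] [DecidableEq β] {m k r : ℕ} {s p : Finset α}

lemma ext {x y : MixedConfig m k r s} (hB : x.blocks = y.blocks)
    (hP : x.partition.parts = y.partition.parts) : x = y := by
  obtain ⟨B, P, _⟩ := x
  obtain ⟨B', P', _⟩ := y
  subst hB
  obtain rfl : P = P' := Finpartition.ext hP
  rfl

instance [Finite α] : Finite (MixedConfig m k r s) :=
  Finite.of_injective (fun x ↦ (x.blocks, x.partition.parts)) fun _ _ h ↦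
    ext (Prod.ext_iff.1 h).1 (Prod.ext_iff.1 h).2

def relabel (f : Relabelling s β) (x : MixedConfig m k r s) : MixedConfig m k r (f s) where
  blocks := f ∘ x.blocks
  partition := (f.finpartition sdiff_subset x.partition).copy <| by
    rw [f.map_sdiff, f.map_biUnion]
  blocks_nonempty i := (f.nonempty_iff (x.blocks_subset i)).2 (x.blocks_nonempty i)
  card_blocks_le i := (f.card_map _ (x.blocks_subset i)).trans_le (x.card_blocks_le i)
  blocks_subset i := f.monotone (x.blocks_subset i)
  disjoint_blocks i j hij := f.disjoint (x.disjoint_blocks i j hij)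
  card_parts := (f.card_parts_finpartition sdiff_subset _).trans x.card_parts
  card_le_of_mem_parts := by
    simp only [Finpartition.copy_parts]
    rintro _ hq
    obtain ⟨p, hp, rfl⟩ := mem_image.1 hq
    exact (f.card_map _ ((x.partition.le hp).trans sdiff_subset)).trans_le
      (x.card_le_of_mem_parts p hp)

lemma relabel_injective (f : Relabelling s β) :
    Function.Injective (relabel (m := m) (k := k) (r := r) f) := by
  intro x y hxy
  have hB : f ∘ x.blocks = f ∘ y.blocks := congrArg blocks hxy
  have hP : x.partition.parts.image f = y.partition.parts.image f :=
    congrArg (fun z ↦ z.partition.parts) hxy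
  have hparts : ∀ z : MixedConfig m k r s, z.partition.parts ∈ s.powerset.powerset := fun z ↦
    mem_powerset.2 fun p hp ↦ mem_powerset.2 ((z.partition.le hp).trans sdiff_subset)
  refine ext (funext fun i ↦ f.injOn ?_ ?_ (congrFun hB i))
    (image_injOn_powerset_of_injOn f.injOn (hparts x) (hparts y) hP)
  · exact mem_powerset.2 (x.blocks_subset i)
  · exact mem_powerset.2 (y.blocks_subset i)

lemma card_le_card_relabel [Finite β] (f : Relabelling s β) :
    Nat.card (MixedConfig m k r s) ≤ Nat.card (MixedConfig m k r (f s)) :=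
  Nat.card_le_card_of_injective _ (relabel_injective f)

theorem card_eq_mixedStirlingLe [Fintype α] (s : Finset α) :
    Nat.card (MixedConfig m k r s) = mixedStirlingLe m #s k r := by
  let e : Fin #s ↪ α := s.equivFin.symm.toEmbedding.trans (Function.Embedding.subtype _)
  have hrange : Set.range e = s := by
    ext a
    refine ⟨?_, fun ha ↦ ⟨s.equivFin ⟨a, ha⟩, by simp [e]⟩⟩
    rintro ⟨i, rfl⟩
    exact (s.equivFin.symm i).2
  have hmap : (univ : Finset (Fin #s)).map e = s := coe_injective (by simp [hrange])
  have hpre : s.preimage e e.injective.injOn = univ := by ext; simp [e]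
  rw [mixedStirlingLe_eq_card]
  apply le_antisymm
  · simpa [Relabelling.preimage, hpre] using card_le_card_relabel (m := m) (k := k) (r := r)
      (Relabelling.preimage e s hrange.ge)
  · simpa [Relabelling.map, hmap] using card_le_card_relabel (m := m) (k := k) (r := r)
      (Relabelling.map e (univ : Finset (Fin #s)))

lemma disjoint_blocks_of_mem_parts (x : MixedConfig m k r s) (hp : p ∈ x.partition.parts)
    (i : Fin (k - 1)) : Disjoint (x.blocks i) p :=
  ((subset_sdiff.1 (x.partition.le hp)).2.mono_right
    (subset_biUnion_of_mem _ (mem_univ i))).symm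

def erasePart (x : MixedConfig m k (r + 1) s) (hp : p ∈ x.partition.parts) :
    MixedConfig m k r (s \ p) where
  blocks := x.blocks
  partition := (x.partition.erasePart hp).copy (sdiff_right_comm _ _ _)
  blocks_nonempty := x.blocks_nonempty
  card_blocks_le := x.card_blocks_le
  blocks_subset i := subset_sdiff.2 ⟨x.blocks_subset i, x.disjoint_blocks_of_mem_parts hp i⟩
  disjoint_blocks := x.disjoint_blocks
  card_parts := (card_erase_of_mem hp).trans (by rw [x.card_parts, Nat.add_sub_cancel])
  card_le_of_mem_parts q hq := x.card_le_of_mem_parts q (mem_of_mem_erase hq)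

lemma notMem_parts_of_nonempty (y : MixedConfig m k r (s \ p)) (hp : p.Nonempty) :
    p ∉ y.partition.parts := fun hmem ↦ by
  obtain ⟨a, ha⟩ := hp
  exact (mem_sdiff.1 (sdiff_subset (y.partition.le hmem ha))).2 ha

def insertPart (y : MixedConfig m k r (s \ p)) (hps : p ⊆ s) (hp : p.Nonempty) (hpm : #p ≤ m) :
    MixedConfig m k (r + 1) s where
  blocks := y.blocks
  partition := by
    refine y.partition.extend (b := p) hp.ne_empty
      (disjoint_sdiff_self_left.mono_left sdiff_subset) ?_
    have hpU : p ⊆ s \ univ.biUnion y.blocks := subset_sdiff.2 ⟨hps,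
      (disjoint_sdiff.mono_right (biUnion_subset.2 fun i _ ↦ y.blocks_subset i))⟩
    rw [sdiff_right_comm]
    exact sdiff_sup_cancel hpU
  blocks_nonempty := y.blocks_nonempty
  card_blocks_le := y.card_blocks_le
  blocks_subset i := (y.blocks_subset i).trans sdiff_subset
  disjoint_blocks := y.disjoint_blocks
  card_parts := by rw [Finpartition.card_extend, y.card_parts]
  card_le_of_mem_parts q hq := by
    obtain rfl | hq := mem_insert.1 hq
    exacts [hpm, y.card_le_of_mem_parts q hq]

variable (m k r s)

def markPartEquiv :
    (Σ x : MixedConfig m k (r + 1) s, x.partition.parts) ≃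
      Σ p : {p ∈ s.powerset | #p ∈ Icc 1 m}, MixedConfig m k r (s \ p) where
  toFun z :=
    ⟨⟨z.2, mem_filter.2 ⟨mem_powerset.2 ((z.1.partition.le z.2.2).trans sdiff_subset),
      mem_Icc.2 ⟨card_pos.2 (z.1.partition.nonempty_of_mem_parts z.2.2),
        z.1.card_le_of_mem_parts _ z.2.2⟩⟩⟩, z.1.erasePart z.2.2⟩
  invFun z :=
    have hz := mem_filter.1 z.1.2
    ⟨z.2.insertPart (mem_powerset.1 hz.1) (card_pos.1 (mem_Icc.1 hz.2).1) (mem_Icc.1 hz.2).2,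
      ⟨z.1, mem_insert_self _ _⟩⟩
  left_inv z := Sigma.subtype_ext (ext rfl (insert_erase z.2.2)) rfl
  right_inv z := Sigma.ext rfl <| heq_of_eq <| ext rfl <| erase_insert <|
    z.2.notMem_parts_of_nonempty (card_pos.1 (mem_Icc.1 (mem_filter.1 z.1.2).2).1)

theorem succ_mul_card_eq_sum [Fintype α] :
    (r + 1) * Nat.card (MixedConfig m k (r + 1) s) =
      ∑ j ∈ Icc 1 m, (#s).choose j * mixedStirlingLe m (#s - j) k r := by
  have := Fintype.ofFinite (MixedConfig m k (r + 1) s)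
  calc (r + 1) * Nat.card (MixedConfig m k (r + 1) s)
      = Nat.card (Σ x : MixedConfig m k (r + 1) s, x.partition.parts) := by
        simp [card_parts, mul_comm]
    _ = Nat.card (Σ p : {p ∈ s.powerset | #p ∈ Icc 1 m}, MixedConfig m k r (s \ p)) :=
        Nat.card_congr (markPartEquiv m k r s)
    _ = ∑ p ∈ s.powerset with #p ∈ Icc 1 m, mixedStirlingLe m (#s - #p) k r := by
        rw [Nat.card_sigma, ← sum_coe_sort _ fun p ↦ mixedStirlingLe m (#s - #p) k r]
        refine sum_congr rfl fun p _ ↦ ?_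
        rw [card_eq_mixedStirlingLe, card_sdiff_of_subset (mem_powerset.1 (mem_filter.1 p.2).1)]
    _ = ∑ j ∈ Icc 1 m, (#s).choose j * mixedStirlingLe m (#s - j) k r :=
        sum_powerset_filter_card_mem s _ fun j ↦ mixedStirlingLe m (#s - j) k r

end MixedConfig

theorem r_mul_mixedStirlingLe_general (n k m r : ℕ)
    (hr : 1 ≤ r) :
    r * mixedStirlingLe m n k r =
      ∑ j ∈ Finset.Icc 1 m, n.choose j * mixedStirlingLe m (n - j) k (r - 1) := by
  obtain ⟨r, rfl⟩ := Nat.exists_eq_add_of_le' hr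
  rw [mixedStirlingLe_eq_card]
  simpa using MixedConfig.succ_mul_card_eq_sum m k r (univ : Finset (Fin n))

theorem r_mul_mixedStirlingLe (n k m r : ℕ)
    (hn : 1 ≤ n) (hk : 1 ≤ k) (hm : 1 ≤ m) (hr : 1 ≤ r) :
    r * mixedStirlingLe m n k r =
      ∑ j ∈ Finset.Icc 1 m, n.choose j * mixedStirlingLe m (n - j) k (r - 1) :=
  r_mul_mixedStirlingLe_general n k m r hr
end
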